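/- arXiv:0904.4589 — 8 statements merged into one kernel-verified Lean document; each statement's English description precedes it below -/
import Mathlib

section
/- Let B be the closed unit ball of an n-dimensional Euclidean vector space and let Φ be an affine map with Φ(B) ⊆ B. If the image Φ(B) contains n+1 affinely independent points of the unit sphere, then Φ is a linear orthogonal transformation. -/
open scoped RealInnerProductSpace

/-- Arithmetic core: bounding the linear coefficient. -/
lemma stmt4_arith (t d L P Q R S : ℝ) (ht : |t| ≤ 1) (hd0 : 0 ≤ d)
    (hdle : d ≤ t ^ 2 / 2) (hQ : 0 ≤ Q)
    (h : 1 + t ^ 2 ≤ 1 + t ^ 2 * P + d ^ 2 * Q + 2 * t * L - 2 * d * R - 2 * (t * d) * S) :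
    -(2 * t * L) ≤ t ^ 2 * (|P - 1| + Q + 2 * |R| + 2 * |S|) := by
  have ht0 := abs_nonneg t
  have ht2 : t ^ 2 ≤ 1 := by nlinarith [sq_abs t]
  have hd1 : d ≤ 1 := by nlinarith
  have hd2 : d ^ 2 ≤ t ^ 2 := by nlinarith
  have b1 : t ^ 2 * P - t ^ 2 ≤ t ^ 2 * |P - 1| := by
    nlinarith [le_abs_self (P - 1), sq_nonneg t]
  have b2 : d ^ 2 * Q ≤ t ^ 2 * Q := by nlinarith
  have e1 : 0 ≤ 2 * d * (|R| + R) := by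
    apply mul_nonneg (by linarith)
    linarith [neg_abs_le R]
  have e2 : 2 * d * |R| ≤ t ^ 2 * |R| := by
    nlinarith [abs_nonneg R]
  have b3 : -(2 * d * R) ≤ t ^ 2 * (2 * |R|) := by nlinarith [abs_nonneg R, sq_nonneg t]
  have m2 : |2 * (t * d) * S| = 2 * (|t| * d) * |S| := by
    rw [abs_mul, abs_mul, abs_mul, abs_of_nonneg hd0]
    norm_num
  have m3 : |t| * d ≤ d := by
    calc |t| * d ≤ 1 * d := mul_le_mul_of_nonneg_right ht hd0
      _ = d := one_mul d
  have m4 : 2 * (|t| * d) * |S| ≤ t ^ 2 * (2 * |S|) := by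
    nlinarith [abs_nonneg S, mul_nonneg (mul_nonneg ht0 hd0) (abs_nonneg S)]
  have b4 : -(2 * (t * d) * S) ≤ t ^ 2 * (2 * |S|) := by
    calc -(2 * (t * d) * S) ≤ |2 * (t * d) * S| := neg_le_abs _
      _ = 2 * (|t| * d) * |S| := m2
      _ ≤ t ^ 2 * (2 * |S|) := m4
  nlinarith [b1, b2, b3, b4]

/-- If `-(2 t L) ≤ t² C` for all small `t`, then `L = 0`. -/
lemma stmt4_zero (L C : ℝ) (hC : 0 ≤ C)
    (key : ∀ t : ℝ, |t| ≤ 1 → -(2 * t * L) ≤ t ^ 2 * C) : L = 0 := by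
  have habs : ∀ t : ℝ, 0 < t → t ≤ 1 → |2 * L| ≤ t * C := by
    intro t h0 h1
    have k1 := key t (by rw [abs_of_pos h0]; exact h1)
    have k2 := key (-t) (by rw [abs_neg, abs_of_pos h0]; exact h1)
    rw [abs_le]
    constructor
    · nlinarith [k1, h0]
    · nlinarith [k2, h0]
  have hL0 : |2 * L| ≤ 0 := by
    apply le_of_forall_pos_le_add
    intro ε hε
    have hC1 : (0:ℝ) < C + 1 := by linarith
    have ht0 : 0 < min 1 (ε / (C + 1)) := lt_min one_pos (div_pos hε hC1)
    have ht1 : min 1 (ε / (C + 1)) ≤ 1 := min_le_left _ _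
    have h := habs _ ht0 ht1
    have htc : min 1 (ε / (C + 1)) * C ≤ ε := by
      have h2 : min 1 (ε / (C + 1)) ≤ ε / (C + 1) := min_le_right _ _
      have h3 : min 1 (ε / (C + 1)) * C ≤ (ε / (C + 1)) * C :=
        mul_le_mul_of_nonneg_right h2 hC
      calc min 1 (ε / (C + 1)) * C ≤ (ε / (C + 1)) * C := h3
        _ ≤ ε := by
          rw [div_mul_eq_mul_div, div_le_iff₀ hC1]
          nlinarith
    linarith
  have h2L : 2 * L = 0 := abs_eq_zero.mp (le_antisymm hL0 (abs_nonneg _))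
  linarith

/-- Tangential perturbation: if `y ↦ ‖f (y - b)‖` is `≥ 1` on the unit sphere
and equals `1` at `q`, then `f (q - b)` is orthogonal to `f v` for unit `v ⊥ q`. -/
lemma stmt4_tangent {E : Type*} [NormedAddCommGroup E] [InnerProductSpace ℝ E]
    (f : E →ₗ[ℝ] E) (b q : E) (hq : ‖q‖ = 1)
    (hmin : ∀ y : E, ‖y‖ = 1 → 1 ≤ ‖f (y - b)‖)
    (heq : ‖f (q - b)‖ = 1)
    (v : E) (hv : ⟪q, v⟫ = 0) (hvn : ‖v‖ = 1) :
    ⟪f (q - b), f v⟫ = 0 := by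
  apply stmt4_zero _ (|⟪f v, f v⟫ - 1| + ⟪f b, f b⟫ + 2 * |⟪f (q - b), f b⟫| + 2 * |⟪f v, f b⟫|)
  · have h1 : (0:ℝ) ≤ ⟪f b, f b⟫ := real_inner_self_nonneg
    have h2 := abs_nonneg (⟪f v, f v⟫ - 1)
    have h3 := abs_nonneg (⟪f (q - b), f b⟫)
    have h4 := abs_nonneg (⟪f v, f b⟫)
    linarith
  intro t ht
  set s := Real.sqrt (1 + t ^ 2) with hs
  have h1t : (0:ℝ) ≤ 1 + t ^ 2 := by positivity
  have hs2 : s ^ 2 = 1 + t ^ 2 := Real.sq_sqrt h1t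
  have hsnn : 0 ≤ s := Real.sqrt_nonneg _
  have hs1 : 1 ≤ s := by nlinarith [hs2, hsnn, sq_nonneg t]
  have hsp : (0:ℝ) < s := by linarith
  have hd0 : 0 ≤ s - 1 := by linarith
  have hdle : s - 1 ≤ t ^ 2 / 2 := by nlinarith
  -- the perturbed point lies on the sphere
  have hqtv : ‖q + t • v‖ ^ 2 = 1 + t ^ 2 := by
    rw [norm_add_sq_real, real_inner_smul_right, hv, norm_smul, hq, hvn, Real.norm_eq_abs,
      mul_one, mul_zero, sq_abs]
    norm_num
  have hqtv' : ‖q + t • v‖ = s := by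
    rw [hs, ← hqtv, Real.sqrt_sq (norm_nonneg _)]
  have hy : ‖s⁻¹ • (q + t • v)‖ = 1 := by
    rw [norm_smul, hqtv', Real.norm_eq_abs, abs_of_pos (by positivity),
      inv_mul_cancel₀ hsp.ne']
  have h1 := hmin _ hy
  have harg : s⁻¹ • (q + t • v) - b = s⁻¹ • (q + t • v - s • b) := by
    rw [smul_sub, smul_smul, inv_mul_cancel₀ hsp.ne', one_smul]
  rw [harg, map_smul, norm_smul, Real.norm_eq_abs, abs_of_pos (by positivity)] at h1
  have h2 : s ≤ ‖f (q + t • v - s • b)‖ := by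
    have h2' := mul_le_mul_of_nonneg_left h1 hsnn
    rwa [mul_one, ← mul_assoc, mul_inv_cancel₀ hsp.ne', one_mul] at h2'
  have hsplit : f (q + t • v - s • b) = f (q - b) + t • f v - (s - 1) • f b := by
    have harg3 : q + t • v - s • b = (q - b) + t • v - (s - 1) • b := by module
    rw [harg3, map_sub, map_add, map_smul, map_smul, map_sub]
  have h3 : s ^ 2 ≤ ‖f (q - b) + t • f v - (s - 1) • f b‖ ^ 2 := by
    rw [← hsplit]
    exact pow_le_pow_left₀ hsnn h2 2
  have hexp : ‖f (q - b) + t • f v - (s - 1) • f b‖ ^ 2 =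
      ⟪f (q - b), f (q - b)⟫ + t ^ 2 * ⟪f v, f v⟫ + (s - 1) ^ 2 * ⟪f b, f b⟫
        + 2 * t * ⟪f (q - b), f v⟫ - 2 * (s - 1) * ⟪f (q - b), f b⟫
        - 2 * (t * (s - 1)) * ⟪f v, f b⟫ := by
    rw [← real_inner_self_eq_norm_sq]
    simp only [inner_sub_left, inner_sub_right, inner_add_left, inner_add_right,
      real_inner_smul_left, real_inner_smul_right]
    rw [real_inner_comm (f v) (f (q - b)), real_inner_comm (f b) (f (q - b)),
      real_inner_comm (f b) (f v)]
    ring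
  have hww : ⟪f (q - b), f (q - b)⟫ = 1 := by
    rw [real_inner_self_eq_norm_sq, heq]; norm_num
  rw [hexp, hww, hs2] at h3
  exact stmt4_arith t (s - 1) _ _ _ _ _ ht hd0 hdle real_inner_self_nonneg (by linarith)

/-- If an affine self-map Φ of an n-dimensional Euclidean space
maps the closed unit ball B into itself and Φ(B) contains n+1 affinely
independent points of the unit sphere, then Φ is a linear orthogonal
transformation. -/
theorem stmt_4 {E : Type*} [NormedAddCommGroup E] [InnerProductSpace ℝ E]
    [FiniteDimensional ℝ E]
    (n : ℕ) (hn : Module.finrank ℝ E = n)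
    (Φ : E →ᵃ[ℝ] E)
    (hΦ : Φ '' Metric.closedBall (0 : E) 1 ⊆ Metric.closedBall (0 : E) 1)
    (q : Fin (n + 1) → E)
    (hq_im : ∀ j, q j ∈ Φ '' Metric.closedBall (0 : E) 1)
    (hq_sph : ∀ j, ‖q j‖ = 1)
    (hq_ind : AffineIndependent ℝ q) :
    ∃ O : E ≃ₗᵢ[ℝ] E, ∀ x, Φ x = O x := by
  classical
  -- trivial case n = 0
  rcases Nat.eq_zero_or_pos n with hn0 | hnpos
  · exfalso
    have hfr : Module.finrank ℝ E = 0 := by rw [hn, hn0]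
    have hsub : Subsingleton E := Module.finrank_zero_iff.mp hfr
    have h0 := hq_sph 0
    rw [Subsingleton.elim (q 0) 0, norm_zero] at h0
    exact zero_ne_one h0
  -- choose preimages
  choose p hpball hpim using hq_im
  have hpn : ∀ j, ‖p j‖ ≤ 1 := by
    intro j
    have := hpball j
    simpa [Metric.mem_closedBall, dist_zero_right] using this
  set A := Φ.linear with hA
  set b := Φ 0 with hb
  have hAff : ∀ x, Φ x = A x + b := by
    intro x
    have := Φ.map_vadd 0 x
    simpa [vadd_eq_add] using this
  have hq0 : ∀ j, A (p j) = q j - b := by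
    intro j
    have h := hpim j
    rw [hAff (p j)] at h
    rw [eq_sub_iff_add_eq]
    exact h
  -- linear independence of differences
  have hli : LinearIndependent ℝ (fun i : {x : Fin (n + 1) // x ≠ 0} => q i - q 0) := by
    have := (affineIndependent_iff_linearIndependent_vsub ℝ q 0).mp hq_ind
    simpa [vsub_eq_sub] using this
  have hcard : Fintype.card {x : Fin (n + 1) // x ≠ 0} = Module.finrank ℝ E := by
    rw [hn]
    simp [Fintype.card_subtype_compl]
  have hspan : Submodule.span ℝ
      (Set.range fun i : {x : Fin (n + 1) // x ≠ 0} => q i - q 0) = ⊤ :=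
    hli.span_eq_top_of_card_eq_finrank' hcard
  -- A is bijective
  have hrange : ∀ i : {x : Fin (n + 1) // x ≠ 0}, q i - q 0 ∈ LinearMap.range A := by
    intro i
    refine ⟨p i - p 0, ?_⟩
    rw [map_sub, hq0, hq0]
    abel
  have hsurj : Function.Surjective A := by
    rw [← LinearMap.range_eq_top, ← top_le_iff, ← hspan, Submodule.span_le]
    rintro _ ⟨i, rfl⟩
    exact hrange i
  have hinj : Function.Injective A := LinearMap.injective_iff_surjective.mpr hsurj
  set Ae : E ≃ₗ[ℝ] E := LinearEquiv.ofBijective A ⟨hinj, hsurj⟩ with hAe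
  have hAeapp : ∀ x, Ae x = A x := fun x => rfl
  -- key inequality: preimages of sphere points have norm ≥ 1
  have hmin : ∀ y : E, ‖y‖ = 1 → 1 ≤ ‖Ae.symm (y - b)‖ := by
    intro y hy
    by_contra hcon
    push_neg at hcon
    have hAx : A (Ae.symm (y - b)) = y - b := by
      have := Ae.apply_symm_apply (y - b)
      rwa [hAeapp] at this
    have hAu : A (Ae.symm y) = y := by
      have := Ae.apply_symm_apply y
      rwa [hAeapp] at this
    have hu0 : Ae.symm y ≠ 0 := by
      intro h0
      rw [h0, map_zero] at hAu
      rw [← hAu, norm_zero] at hy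
      exact zero_ne_one hy
    have hunorm : (0:ℝ) < ‖Ae.symm y‖ := norm_pos_iff.mpr hu0
    set ε := (1 - ‖Ae.symm (y - b)‖) / ‖Ae.symm y‖ with hε
    have hεpos : 0 < ε := div_pos (by linarith) hunorm
    have hz : ‖Ae.symm (y - b) + ε • Ae.symm y‖ ≤ 1 := by
      calc ‖Ae.symm (y - b) + ε • Ae.symm y‖
          ≤ ‖Ae.symm (y - b)‖ + ‖ε • Ae.symm y‖ := norm_add_le _ _
        _ = ‖Ae.symm (y - b)‖ + ε * ‖Ae.symm y‖ := by
            rw [norm_smul, Real.norm_eq_abs, abs_of_pos hεpos]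
        _ = ‖Ae.symm (y - b)‖ + (1 - ‖Ae.symm (y - b)‖) := by
            rw [hε]; field_simp
        _ = 1 := by ring
    have him : Φ (Ae.symm (y - b) + ε • Ae.symm y) ∈ Metric.closedBall (0 : E) 1 := by
      apply hΦ
      exact ⟨_, by simpa [Metric.mem_closedBall, dist_zero_right] using hz, rfl⟩
    have hΦz : Φ (Ae.symm (y - b) + ε • Ae.symm y) = (1 + ε) • y := by
      rw [hAff, map_add, map_smul, hAx, hAu]
      module
    rw [hΦz] at him
    have hle : ‖(1 + ε) • y‖ ≤ 1 := by
      simpa [Metric.mem_closedBall, dist_zero_right] using him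
    rw [norm_smul, Real.norm_eq_abs, abs_of_pos (by linarith), hy, mul_one] at hle
    linarith
  -- preimages of the q j
  have hp_eq : ∀ j, Ae.symm (q j - b) = p j := by
    intro j
    rw [LinearEquiv.symm_apply_eq, hAeapp, hq0]
  have hpnorm : ∀ j, ‖p j‖ = 1 := by
    intro j
    refine le_antisymm (hpn j) ?_
    have := hmin (q j) (hq_sph j)
    rwa [hp_eq] at this
  set f : E →ₗ[ℝ] E := Ae.symm.toLinearMap with hf
  have hfapp : ∀ x, f x = Ae.symm x := fun x => rfl
  have hmin' : ∀ y : E, ‖y‖ = 1 → 1 ≤ ‖f (y - b)‖ := by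
    intro y hy; rw [hfapp]; exact hmin y hy
  have heq : ∀ j, ‖f (q j - b)‖ = 1 := by
    intro j
    rw [hfapp, hp_eq, hpnorm]
  -- tangential orthogonality, for all v ⊥ q j
  have htan : ∀ j, ∀ v : E, ⟪q j, v⟫ = 0 → ⟪f (q j - b), f v⟫ = 0 := by
    intro j v hv
    rcases eq_or_ne v 0 with rfl | hv0
    · simp
    · have hvn : (0:ℝ) < ‖v‖ := norm_pos_iff.mpr hv0
      have h := stmt4_tangent f b (q j) (hq_sph j) hmin' (heq j) (‖v‖⁻¹ • v)
        (by rw [real_inner_smul_right, hv, mul_zero])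
        (by rw [norm_smul, Real.norm_eq_abs, abs_of_pos (inv_pos.mpr hvn),
              inv_mul_cancel₀ hvn.ne'])
      rw [map_smul, real_inner_smul_right] at h
      rcases mul_eq_zero.mp h with h' | h'
      · exact absurd h' (inv_pos.mpr hvn).ne'
      · exact h'
  have hqq : ∀ j, ⟪q j, q j⟫ = 1 := by
    intro j
    rw [real_inner_self_eq_norm_sq, hq_sph]; norm_num
  -- weak eigenvector property
  have hweak : ∀ j (w : E),
      ⟪f (q j - b), f w⟫ = ⟪w, q j⟫ * ⟪f (q j - b), f (q j)⟫ := by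
    intro j w
    have hdec : w = ⟪w, q j⟫ • q j + (w - ⟪w, q j⟫ • q j) := by abel
    have hperp : ⟪q j, w - ⟪w, q j⟫ • q j⟫ = 0 := by
      rw [inner_sub_right, real_inner_smul_right, hqq, real_inner_comm (q j) w]
      ring
    conv_lhs => rw [hdec]
    rw [map_add, inner_add_right, map_smul, real_inner_smul_right, htan j _ hperp]
    ring
  -- all μ j are equal
  have hqne : ∀ j k, j ≠ k → ⟪q k, q j⟫ < 1 := by
    intro j k hjk
    have hne : q j - q k ≠ 0 := sub_ne_zero.mpr (fun h => hjk (hq_ind.injective h))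
    have hpos : 0 < ‖q j - q k‖ ^ 2 := pow_pos (norm_pos_iff.mpr hne) 2
    rw [norm_sub_sq_real, hq_sph, hq_sph] at hpos
    have hcomm := real_inner_comm (q j) (q k)
    nlinarith [hpos, hcomm]
  have hE1 : ∀ j, ⟪f (q j), f (q j)⟫ - 2 * ⟪f b, f (q j)⟫ + ⟪f b, f b⟫ = 1 := by
    intro j
    have h2 : ⟪f (q j - b), f (q j - b)⟫ = 1 := by
      rw [real_inner_self_eq_norm_sq, heq]; norm_num
    rw [map_sub, inner_sub_left, inner_sub_right, inner_sub_right] at h2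
    have hcomm : ⟪f b, f (q j)⟫ = ⟪f (q j), f b⟫ := real_inner_comm _ _
    linarith
  have hR3 : ∀ j, ⟪f b, f (q j)⟫ = ⟪f (q j - b), f (q j)⟫ + ⟪f b, f b⟫ - 1 := by
    intro j
    have h1 := hweak j (q j)
    rw [hqq, one_mul] at h1
    have h2 : ⟪f (q j - b), f (q j)⟫ = ⟪f (q j), f (q j)⟫ - ⟪f b, f (q j)⟫ := by
      rw [map_sub, inner_sub_left]
    have h3 := hE1 j
    linarith
  have hmueq : ∀ j k, ⟪f (q j - b), f (q j)⟫ = ⟪f (q k - b), f (q k)⟫ := by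
    intro j k
    rcases eq_or_ne j k with rfl | hjk
    · rfl
    · have h1 := hweak j (q k)
      have h2 := hweak k (q j)
      have h1' : ⟪f (q j), f (q k)⟫ - ⟪f b, f (q k)⟫
          = ⟪q k, q j⟫ * ⟪f (q j - b), f (q j)⟫ := by
        rw [← inner_sub_left, ← map_sub]; exact h1
      have h2' : ⟪f (q k), f (q j)⟫ - ⟪f b, f (q j)⟫
          = ⟪q j, q k⟫ * ⟪f (q k - b), f (q k)⟫ := by
        rw [← inner_sub_left, ← map_sub]; exact h2
      have hsymm : ⟪f (q j), f (q k)⟫ = ⟪f (q k), f (q j)⟫ := real_inner_comm _ _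
      have hc : ⟪q k, q j⟫ = ⟪q j, q k⟫ := real_inner_comm _ _
      have hb1 := hR3 j
      have hb2 := hR3 k
      have hkey : (⟪f (q j - b), f (q j)⟫ - ⟪f (q k - b), f (q k)⟫) * (⟪q k, q j⟫ - 1)
          = 0 := by
        linear_combination h2' - h1' + hb1 - hb2 + hsymm
          - ⟪f (q k - b), f (q k)⟫ * hc
      rcases mul_eq_zero.mp hkey with h | h
      · linarith
      · exfalso
        have := hqne j k hjk
        linarith
  -- the bilinear identity on a spanning set
  have hdiff : ∀ (j : Fin (n + 1)) (w : E),
      ⟪f (q j - q 0), f w⟫ = ⟪w, q j - q 0⟫ * ⟪f (q 0 - b), f (q 0)⟫ := by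
    intro j w
    have h1 := hweak j w
    have h2 := hweak 0 w
    rw [hmueq j 0] at h1
    have hsplit : f (q j - q 0) = f (q j - b) - f (q 0 - b) := by
      rw [← map_sub]; congr 1; abel
    rw [hsplit, inner_sub_left, h1, h2, inner_sub_right]
    ring
  have hbil : ∀ u w : E, ⟪f u, f w⟫ = ⟪w, u⟫ * ⟪f (q 0 - b), f (q 0)⟫ := by
    have hP : ∀ u ∈ Submodule.span ℝ
        (Set.range fun i : {x : Fin (n + 1) // x ≠ 0} => q i - q 0),
        ∀ w : E, ⟪f u, f w⟫ = ⟪w, u⟫ * ⟪f (q 0 - b), f (q 0)⟫ := by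
      intro u hu
      induction hu using Submodule.span_induction with
      | mem x hx =>
        obtain ⟨i, rfl⟩ := hx
        exact hdiff i
      | zero => intro w; simp
      | add x y hx hy ihx ihy =>
        intro w
        rw [map_add, inner_add_left, inner_add_right, ihx w, ihy w]
        ring
      | smul a x hx ihx =>
        intro w
        rw [map_smul, real_inner_smul_left, real_inner_smul_right, ihx w]
        ring
    intro u w
    exact hP u (by rw [hspan]; trivial) w
  -- conclude b = 0 and μ = 1
  have hγ0 : ⟪f b, f b⟫ = 0 := by
    have h1 := hbil (q 0) b
    have h2 := hweak 0 b
    have h2' : ⟪f (q 0), f b⟫ - ⟪f b, f b⟫ = ⟪b, q 0⟫ * ⟪f (q 0 - b), f (q 0)⟫ := by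
      rw [← inner_sub_left, ← map_sub]; exact h2
    linarith
  have hμ0 : ⟪f (q 0 - b), f (q 0)⟫ ≠ 0 := by
    intro h0
    have h1 := hbil (q 0 - b) (q 0 - b)
    rw [h0, mul_zero] at h1
    have h2 : ⟪f (q 0 - b), f (q 0 - b)⟫ = 1 := by
      rw [real_inner_self_eq_norm_sq, heq]; norm_num
    rw [h2] at h1
    exact one_ne_zero h1
  have hb0 : b = 0 := by
    have h1 := hbil b b
    rw [hγ0] at h1
    have hbb : ⟪b, b⟫ = 0 := by
      rcases mul_eq_zero.mp h1.symm with h | h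
      · exact h
      · exact absurd h hμ0
    exact inner_self_eq_zero.mp hbb
  have hμ1 : ⟪f (q 0 - b), f (q 0)⟫ = 1 := by
    have h := hR3 0
    rw [hb0, sub_zero] at h ⊢
    simp only [map_zero, inner_zero_left, inner_zero_right] at h
    linarith
  -- f preserves inner products, hence so does Ae
  have hinner : ∀ x y : E, ⟪Ae x, Ae y⟫ = ⟪x, y⟫ := by
    intro x y
    have h := hbil (Ae x) (Ae y)
    rw [hμ1, mul_one] at h
    rw [hfapp, hfapp, Ae.symm_apply_apply, Ae.symm_apply_apply] at h
    rw [h]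
    exact real_inner_comm _ _
  refine ⟨Ae.isometryOfInner hinner, ?_⟩
  intro x
  rw [hAff, hb0, add_zero]
  rfl
end

section
/- The linear transformation T(x,y) = (−x, y/2) of ℝ² maps the convex set S bounded by the segment [−1,1]×{0} and the graph of f into S, where f(x) = ((1−x)/2)²((1+x)/2)^{1/2} + 2((1−x)/2)^{1/2}((1+x)/2)^{5/2} + (1−x²)/4; i.e., f(x) ≥ (1/2)f(−x) for all x ∈ [−1,1]. -/
open Real

noncomputable def paperF (x : ℝ) : ℝ :=
  ((1 - x) / 2) ^ (2 : ℕ) * ((1 + x) / 2) ^ ((1 : ℝ) / 2) +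
    2 * ((1 - x) / 2) ^ ((1 : ℝ) / 2) * ((1 + x) / 2) ^ ((5 : ℝ) / 2) +
    (1 - x ^ 2) / 4

lemma rpow_five_half {t : ℝ} (ht : 0 ≤ t) : t ^ ((5 : ℝ)/2) = (Real.sqrt t) ^ 5 := by
  rw [Real.sqrt_eq_rpow, ← Real.rpow_natCast (t ^ ((1:ℝ)/2)) 5, ← Real.rpow_mul ht]
  norm_num

set_option maxHeartbeats 1000000 in
lemma key_ineq : ∀ x ∈ Set.Icc (-1 : ℝ) 1, (1 / 2) * paperF (-x) ≤ paperF x := by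
  intro x hx
  obtain ⟨h1, h2⟩ := hx
  have hu0 : (0:ℝ) ≤ (1 - x)/2 := by linarith
  have hv0 : (0:ℝ) ≤ (1 + x)/2 := by linarith
  set a := Real.sqrt ((1 - x)/2) with ha
  set b := Real.sqrt ((1 + x)/2) with hb
  have ha0 : 0 ≤ a := Real.sqrt_nonneg _
  have hb0 : 0 ≤ b := Real.sqrt_nonneg _
  have ha2 : a ^ 2 = (1 - x)/2 := Real.sq_sqrt hu0
  have hb2 : b ^ 2 = (1 + x)/2 := Real.sq_sqrt hv0
  have hsum : a ^ 2 + b ^ 2 = 1 := by rw [ha2, hb2]; ring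
  have ha1 : a ≤ 1 := by nlinarith
  have hb1 : b ≤ 1 := by nlinarith
  have e1 : ((1 - x)/2) ^ ((1:ℝ)/2) = a := (Real.sqrt_eq_rpow _).symm
  have e2 : ((1 + x)/2) ^ ((1:ℝ)/2) = b := (Real.sqrt_eq_rpow _).symm
  have e3 : ((1 + x)/2) ^ ((5:ℝ)/2) = b ^ 5 := rpow_five_half hv0
  have e4 : ((1 - x)/2) ^ ((5:ℝ)/2) = a ^ 5 := rpow_five_half hu0
  have e5 : ((1 - (-x))/2 : ℝ) = (1 + x)/2 := by ring
  have e6 : ((1 + (-x))/2 : ℝ) = (1 - x)/2 := by ring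
  have e7 : (1 - x^2)/4 = a^2 * b^2 := by rw [ha2, hb2]; ring
  have e8 : (1 - (-x)^2)/4 = a^2 * b^2 := by rw [ha2, hb2]; ring
  have e9 : ((1 - x)/2) ^ (2:ℕ) = a ^ 4 := by rw [← ha2]; ring
  have e10 : ((1 + x)/2) ^ (2:ℕ) = b ^ 4 := by rw [← hb2]; ring
  have hA : 1 - 2*b^2 + 4*b^3 ≥ 0 := by
    nlinarith [mul_nonneg hb0 (sq_nonneg (3*b - 1)), sq_nonneg (b - 1/3)]
  have haa : a^2 ≤ a := by nlinarith [mul_nonneg ha0 (sub_nonneg.mpr ha1)]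
  have h2 : a + 4*b^3 - b^2 ≥ 0 := by nlinarith
  have h : 2*a^3 + 4*b^4 + a*b - b^3 - 2*a^4 ≥ 0 := by
    nlinarith [mul_nonneg hb0 h2, mul_nonneg (pow_nonneg ha0 3) (sub_nonneg.mpr ha1)]
  have hmain := mul_nonneg (mul_nonneg ha0 hb0) h
  have expand : a*b*(2*a^3 + 4*b^4 + a*b - b^3 - 2*a^4)
      = 2*(a^4*b + 2*a*b^5 + a^2*b^2) - (b^4*a + 2*b*a^5 + a^2*b^2) := by ring
  unfold paperF
  rw [e5, e6, e1, e2, e3, e4, e7, e8, e9, e10]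
  linarith [hmain, expand.symm.le.trans (le_of_eq rfl)]

/-- The linear map T(x,y) = (−x, y/2) maps the convex set
S = {(x,y) : x ∈ [−1,1], 0 ≤ y ≤ f(x)} into itself; equivalently
f(x) ≥ (1/2)·f(−x) for all x ∈ [−1,1]. -/
theorem stmt_6
    (S : Set (ℝ × ℝ))
    (hS : S = {p : ℝ × ℝ | p.1 ∈ Set.Icc (-1 : ℝ) 1 ∧ 0 ≤ p.2 ∧ p.2 ≤ paperF p.1})
    (T : ℝ × ℝ → ℝ × ℝ) (hT : T = fun p => (-p.1, p.2 / 2)) :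
    T '' S ⊆ S ∧ ∀ x ∈ Set.Icc (-1 : ℝ) 1, (1 / 2) * paperF (-x) ≤ paperF x := by
  constructor
  · rintro q ⟨p, hp, rfl⟩
    rw [hS] at hp ⊢
    obtain ⟨⟨hx1, hx2⟩, hy0, hyf⟩ := hp
    rw [hT]
    refine ⟨⟨by linarith, by linarith⟩, by linarith, ?_⟩
    have := key_ineq (-p.1) ⟨by linarith, by linarith⟩
    simp only [neg_neg] at this
    linarith
  · exact key_ineq
end

section
/- For every α > 1, the linear map T_α(x,y) = (−x, α y/2) does not map the convex set S (bounded by the interval [−1,1] and the graph of f) into itself; i.e., there exists x ∈ [−1,1] with f(x) − α·(1/2)f(−x) < 0. -/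
/-!
Writing `x = s² - c²` with `s, c ≥ 0` and `s² + c² = 1` removes the square roots:
`f x = c⁴ s + 2 c s⁵ + s² c²` and `f (-x) = s⁴ c + 2 s c⁵ + s² c²`.
As `s → 0` (i.e. `x → -1`) both `f x` and `f (-x) / 2` are `s + O(s²)`, so their ratio
tends to `1` and any `α > 1` beats it for small `s`.
-/

open Real

lemma sq_rpow_natCast_div_two {s : ℝ} (hs : 0 ≤ s) (n : ℕ) :
    (s ^ 2) ^ ((n : ℝ) / 2) = s ^ n := by
  rw [← Real.rpow_natCast s 2, ← Real.rpow_mul hs, Nat.cast_ofNat,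
    mul_div_cancel₀ _ two_ne_zero, Real.rpow_natCast]

lemma paperF_sq_sub_sq {s c : ℝ} (hs : 0 ≤ s) (hc : 0 ≤ c) (h : s ^ 2 + c ^ 2 = 1) :
    paperF (s ^ 2 - c ^ 2) = c ^ 4 * s + 2 * c * s ^ 5 + s ^ 2 * c ^ 2 := by
  have hminus : (1 - (s ^ 2 - c ^ 2)) / 2 = c ^ 2 := by linear_combination -h / 2
  have hplus : (1 + (s ^ 2 - c ^ 2)) / 2 = s ^ 2 := by linear_combination -h / 2
  have hhalf_s := sq_rpow_natCast_div_two hs 1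
  have hhalf_c := sq_rpow_natCast_div_two hc 1
  have hfive := sq_rpow_natCast_div_two hs 5
  push_cast at hhalf_s hhalf_c hfive
  rw [paperF, hminus, hplus, hhalf_s, hhalf_c, hfive]
  linear_combination -(s ^ 2 + c ^ 2 + 1) / 4 * h

lemma paperF_sq_sub_sq_lt {α s c : ℝ} (hα : 0 < α) (hs : 0 < s) (hc : 0 ≤ c)
    (h : s ^ 2 + c ^ 2 = 1) (hsα : 1 + 3 * s < α * (1 - 3 * s ^ 2)) :
    paperF (s ^ 2 - c ^ 2) < α / 2 * paperF (c ^ 2 - s ^ 2) := by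
  rw [paperF_sq_sub_sq hs.le hc h, paperF_sq_sub_sq hc hs.le (by linear_combination h)]
  have hs1 : s ≤ 1 := by nlinarith
  have hc1 : c ≤ 1 := by nlinarith
  have hupper : c ^ 4 * s + 2 * c * s ^ 5 + s ^ 2 * c ^ 2 ≤ s + 3 * s ^ 2 := by
    have h4 : c ^ 4 * s ≤ s := mul_le_of_le_one_left hs.le (pow_le_one₀ hc hc1)
    have h5 : c * s ^ 5 ≤ s ^ 2 :=
      calc c * s ^ 5 ≤ s ^ 5 := mul_le_of_le_one_left (by positivity) hc1
        _ ≤ s ^ 2 := pow_le_pow_of_le_one hs.le hs1 (by norm_num)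
    have h2 : s ^ 2 * c ^ 2 ≤ s ^ 2 :=
      mul_le_of_le_one_right (by positivity) (pow_le_one₀ hc hc1)
    linarith
  have hbernoulli : 1 - 3 * s ^ 2 ≤ c ^ 6 := by
    have := one_add_mul_le_pow (a := -s ^ 2) (by nlinarith) 3
    rw [show c ^ 6 = (c ^ 2) ^ 3 by ring, show c ^ 2 = 1 + -s ^ 2 by linarith]
    push_cast at this
    linarith
  have hlower :
      α * s * (1 - 3 * s ^ 2) ≤ α / 2 * (s ^ 4 * c + 2 * s * c ^ 5 + s ^ 2 * c ^ 2) := by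
    have : c ^ 6 ≤ c ^ 5 := pow_le_pow_of_le_one hc hc1 (by norm_num)
    have : 0 ≤ s ^ 4 * c + s ^ 2 * c ^ 2 := by positivity
    nlinarith [mul_pos hα hs]
  nlinarith

lemma exists_pos_one_add_lt {α : ℝ} (hα : 1 < α) :
    ∃ s : ℝ, 0 < s ∧ s ≤ 1 ∧ 1 + 3 * s < α * (1 - 3 * s ^ 2) := by
  have hα0 : 0 < α := by linarith
  refine ⟨(α - 1) / (8 * α), by positivity, ?_, ?_⟩
  · rw [div_le_one (by positivity)]; linarith
  · field_simp
    nlinarith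

/-- For every α > 1 the map T_α(x,y) = (−x, αy/2) does not map
S = {(x,y) : x ∈ [−1,1], 0 ≤ y ≤ f(x)} into itself: there is x ∈ [−1,1] with
f(x) − α·(1/2)·f(−x) < 0. -/
theorem stmt_7 (α : ℝ) (hα : 1 < α) :
    ∃ x ∈ Set.Icc (-1 : ℝ) 1, paperF x - α * ((1 / 2) * paperF (-x)) < 0 := by
  obtain ⟨s, hs, hs1, hsα⟩ := exists_pos_one_add_lt hα
  set c := √(1 - s ^ 2)
  have hc : 0 ≤ c := Real.sqrt_nonneg _
  have h : s ^ 2 + c ^ 2 = 1 := by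
    rw [Real.sq_sqrt (by nlinarith)]; ring
  refine ⟨s ^ 2 - c ^ 2, ⟨by nlinarith, by nlinarith⟩, ?_⟩
  rw [neg_sub]
  linarith [paperF_sq_sub_sq_lt (by linarith) hs hc h hsα]
end

section
/- A linear map ψ on the real space of Hermitian operators of a finite-dimensional Hilbert space which is both positive (maps positive semidefinite operators to positive semidefinite operators) and orthogonal with respect to the Hilbert–Schmidt inner product ⟨A,B⟩ = Tr(AB) induces a bijection on the set of pure states (rank-one orthogonal projections). -/
/-!
Orthogonality makes `ψ` injective on Hermitian matrices, and positivity makes it preserve them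
(`A = A⁺ - A⁻`), so it is bijective on them by finite dimension. Pure states are exactly the
positive semidefinite `ρ` with `Tr ρ = Tr ρ² = 1`: for nonnegative eigenvalues with
`∑ λᵢ = ∑ λᵢ² = 1` each `λᵢ (1 - λᵢ)` is nonnegative with zero sum. A positive `P` with
`Tr P² = 1` has `Tr P ≥ 1`; applied to the images of the diagonal matrix units this gives
`Tr ψ(1) ≥ n = Tr ψ(1)²`, so `Tr (ψ(1) - 1)² ≤ 0` and `ψ(1) = 1`, i.e. `ψ` preserves traces.
Finally `ψ` reflects positivity, since `x* ρ x = Tr (ρ x x*) = Tr (ψ(ρ) ψ(x x*)) ≥ 0` when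
`ψ(ρ) ≥ 0`.
-/

open scoped ComplexOrder

/-- A pure state: a rank-one orthogonal projection, i.e. a Hermitian idempotent
of trace 1. -/
def IsPureState {n : ℕ} (ρ : Matrix (Fin n) (Fin n) ℂ) : Prop :=
  ρ.IsHermitian ∧ ρ * ρ = ρ ∧ ρ.trace = 1

open Matrix

lemma mem_zero_one_of_sum_eq_one_of_sum_sq_eq_one {ι : Type*} [Fintype ι] {f : ι → ℝ}
    (hf : ∀ i, 0 ≤ f i) (h1 : ∑ i, f i = 1) (h2 : ∑ i, f i ^ 2 = 1) (i : ι) :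
    f i ∈ ({0, 1} : Set ℝ) := by
  have hle (j : ι) : f j ≤ 1 := h1 ▸ Finset.single_le_sum (fun j _ => hf j) (Finset.mem_univ j)
  have hsum : ∑ j, f j * (1 - f j) = 0 := by
    simp only [mul_sub, mul_one, ← sq, Finset.sum_sub_distrib, h1, h2, sub_self]
  have hi := (Finset.sum_eq_zero_iff_of_nonneg fun j _ =>
    mul_nonneg (hf j) (sub_nonneg.mpr (hle j))).mp hsum i (Finset.mem_univ i)
  rcases mul_eq_zero.mp hi with h | h
  · exact .inl h
  · exact .inr (sub_eq_zero.mp h).symm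

namespace Matrix

variable {m 𝕜 : Type*} [Fintype m] [RCLike 𝕜] {A B : Matrix m m 𝕜}

lemma IsHermitian.eq_zero_of_trace_mul_self_nonpos (hA : A.IsHermitian)
    (h : (A * A).trace ≤ 0) : A = 0 := by
  refine trace_conjTranspose_mul_self_eq_zero_iff.mp (le_antisymm ?_ ?_)
  · rwa [hA.eq]
  · exact (posSemidef_conjTranspose_mul_self A).trace_nonneg

lemma IsHermitian.posSemidef_of_trace_mul_nonneg (hA : A.IsHermitian)
    (h : ∀ B : Matrix m m 𝕜, B.PosSemidef → 0 ≤ (A * B).trace) : A.PosSemidef := by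
  refine .of_dotProduct_mulVec_nonneg hA fun x => ?_
  simpa [mul_vecMulVec, dotProduct_comm] using h _ (posSemidef_vecMulVec_self_star x)

variable [DecidableEq m]

lemma PosSemidef.trace_mul_nonneg (hA : A.PosSemidef) (hB : B.PosSemidef) :
    0 ≤ (A * B).trace := by
  open scoped MatrixOrder in
  obtain ⟨C, rfl⟩ := CStarAlgebra.nonneg_iff_eq_star_mul_self.mp hA.nonneg
  rw [mul_assoc, trace_mul_comm, mul_assoc, star_eq_conjTranspose, ← mul_assoc]
  exact (hB.mul_mul_conjTranspose_same C).trace_nonneg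

lemma IsHermitian.trace_cfc (hA : A.IsHermitian) (f : ℝ → ℝ) :
    (cfc f A).trace = ∑ i, (f (hA.eigenvalues i) : 𝕜) := by
  rw [hA.cfc_eq, IsHermitian.cfc, Unitary.conjStarAlgAut_apply, trace_mul_cycle,
    Unitary.coe_star_mul_self, one_mul, trace_diagonal]
  rfl

lemma IsHermitian.trace_mul_self (hA : A.IsHermitian) :
    (A * A).trace = ∑ i, ((hA.eigenvalues i ^ 2 : ℝ) : 𝕜) := by
  rw [← sq, ← cfc_pow_id (R := ℝ) A 2 hA.isSelfAdjoint, hA.trace_cfc]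

lemma IsHermitian.mul_self_eq_self_iff (hA : A.IsHermitian) :
    A * A = A ↔ ∀ i, hA.eigenvalues i ∈ ({0, 1} : Set ℝ) := by
  rw [← IsIdempotentElem, isIdempotentElem_iff_spectrum_subset ℝ A hA.isSelfAdjoint,
    hA.spectrum_real_eq_range_eigenvalues, Set.range_subset_iff]

lemma PosSemidef.one_le_trace (hA : A.PosSemidef) (h : (A * A).trace = 1) :
    1 ≤ A.trace := by
  have hnn := hA.eigenvalues_nonneg
  rw [hA.isHermitian.trace_mul_self, ← RCLike.ofReal_sum, ← RCLike.ofReal_one,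
    RCLike.ofReal_inj] at h
  rw [hA.isHermitian.trace_eq_sum_eigenvalues, ← RCLike.ofReal_sum, ← RCLike.ofReal_one,
    RCLike.ofReal_le_ofReal]
  have hsq := Finset.sum_sq_le_sq_sum_of_nonneg (s := Finset.univ) fun i _ => hnn i
  nlinarith [Finset.sum_nonneg fun i (_ : i ∈ Finset.univ) => hnn i]

lemma PosSemidef.mul_self_eq_self (hA : A.PosSemidef) (h1 : A.trace = 1)
    (h2 : (A * A).trace = 1) : A * A = A := by
  rw [hA.isHermitian.trace_eq_sum_eigenvalues, ← RCLike.ofReal_sum, ← RCLike.ofReal_one,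
    RCLike.ofReal_inj] at h1
  rw [hA.isHermitian.trace_mul_self, ← RCLike.ofReal_sum, ← RCLike.ofReal_one,
    RCLike.ofReal_inj] at h2
  exact hA.isHermitian.mul_self_eq_self_iff.mpr
    (mem_zero_one_of_sum_eq_one_of_sum_sq_eq_one hA.eigenvalues_nonneg h1 h2)

end Matrix

lemma isPureState_iff {n : ℕ} {ρ : Matrix (Fin n) (Fin n) ℂ} :
    IsPureState ρ ↔ ρ.PosSemidef ∧ ρ.trace = 1 ∧ (ρ * ρ).trace = 1 := by
  refine ⟨fun ⟨hH, hsq, htr⟩ => ⟨?_, htr, by rw [hsq, htr]⟩,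
    fun ⟨hpsd, htr, hsq⟩ => ⟨hpsd.isHermitian, hpsd.mul_self_eq_self htr hsq, htr⟩⟩
  rw [← hsq]
  simpa only [hH.eq] using posSemidef_conjTranspose_mul_self ρ

section PositiveOrthogonalMaps

variable {m 𝕜 : Type*} [Fintype m] [DecidableEq m] [RCLike 𝕜]

def PreservesPosSemidef (ψ : Matrix m m 𝕜 →ₗ[ℝ] Matrix m m 𝕜) : Prop :=
  ∀ A : Matrix m m 𝕜, A.PosSemidef → (ψ A).PosSemidef

def PreservesTraceMul (ψ : Matrix m m 𝕜 →ₗ[ℝ] Matrix m m 𝕜) : Prop :=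
  ∀ A B : Matrix m m 𝕜, A.IsHermitian → B.IsHermitian → (ψ A * ψ B).trace = (A * B).trace

variable {ψ : Matrix m m 𝕜 →ₗ[ℝ] Matrix m m 𝕜} {A : Matrix m m 𝕜}

lemma PreservesPosSemidef.isHermitian_map (hpos : PreservesPosSemidef ψ) (hA : A.IsHermitian) :
    (ψ A).IsHermitian := by
  open scoped MatrixOrder in
  rw [← CFC.posPart_sub_negPart A hA.isSelfAdjoint, map_sub]
  exact (hpos _ (CFC.posPart_nonneg A).posSemidef).isHermitian.sub
    (hpos _ (CFC.negPart_nonneg A).posSemidef).isHermitian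

lemma PreservesTraceMul.injOn (horth : PreservesTraceMul ψ) :
    Set.InjOn ψ {A | A.IsHermitian} := by
  intro A hA B hB h
  have hAB : (A - B).IsHermitian := hA.sub hB
  refine sub_eq_zero.mp (hAB.eq_zero_of_trace_mul_self_nonpos ?_)
  rw [← horth _ _ hAB hAB, map_sub, h, sub_self, zero_mul, trace_zero]

lemma PreservesTraceMul.surjOn (hpos : PreservesPosSemidef ψ) (horth : PreservesTraceMul ψ) :
    Set.SurjOn ψ {A | A.IsHermitian} {A | A.IsHermitian} := by
  let S := selfAdjoint.submodule ℝ (Matrix m m 𝕜)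
  let φ : S →ₗ[ℝ] S := ψ.restrict fun A hA => hpos.isHermitian_map hA
  have hφ : Function.Injective φ := fun A B h =>
    Subtype.ext (horth.injOn A.2 B.2 (congrArg Subtype.val h))
  intro B hB
  obtain ⟨A, hA⟩ := LinearMap.injective_iff_surjective.mp hφ ⟨B, hB⟩
  exact ⟨A, A.2, congrArg Subtype.val hA⟩

lemma PreservesTraceMul.map_one (hpos : PreservesPosSemidef ψ) (horth : PreservesTraceMul ψ) :
    ψ 1 = 1 := by
  let E (i : m) : Matrix m m 𝕜 := single i i 1
  have hE (i : m) : (E i).PosSemidef ∧ (E i * E i).trace = 1 := by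
    refine ⟨?_, by simp [E, single_mul_single_same]⟩
    rw [show E i = diagonal (Pi.single i 1) from (diagonal_single i 1).symm]
    exact PosSemidef.diagonal (Pi.single_nonneg.mpr zero_le_one)
  have hsum : ∑ i, E i = 1 := sum_single_one
  have hle : (Fintype.card m : 𝕜) ≤ (ψ 1).trace := by
    rw [← hsum, map_sum, trace_sum]
    simpa using Finset.sum_le_sum fun i (_ : i ∈ Finset.univ) =>
      (hpos _ (hE i).1).one_le_trace
        (by rw [horth _ _ (hE i).1.isHermitian (hE i).1.isHermitian, (hE i).2])
  have hψ1 : (ψ 1 * ψ 1).trace = Fintype.card m := by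
    rw [horth _ _ isHermitian_one isHermitian_one, mul_one, trace_one]
  have hB : (ψ 1 - 1).IsHermitian := (hpos.isHermitian_map isHermitian_one).sub isHermitian_one
  refine sub_eq_zero.mp (hB.eq_zero_of_trace_mul_self_nonpos ?_)
  calc ((ψ 1 - 1) * (ψ 1 - 1)).trace = 2 * (Fintype.card m - (ψ 1).trace) := by
        simp only [sub_mul, mul_sub, mul_one, one_mul, trace_sub, hψ1, trace_one]
        ring
    _ ≤ 0 := mul_nonpos_of_nonneg_of_nonpos zero_le_two (sub_nonpos.mpr hle)

lemma PreservesTraceMul.trace_map (hpos : PreservesPosSemidef ψ) (horth : PreservesTraceMul ψ)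
    (hA : A.IsHermitian) : (ψ A).trace = A.trace := by
  simpa only [horth.map_one hpos, mul_one] using horth A 1 hA isHermitian_one

lemma PreservesTraceMul.posSemidef_of_posSemidef_map (hpos : PreservesPosSemidef ψ)
    (horth : PreservesTraceMul ψ) (hA : A.IsHermitian) (hψA : (ψ A).PosSemidef) :
    A.PosSemidef :=
  hA.posSemidef_of_trace_mul_nonneg fun B hB =>
    horth A B hA hB.isHermitian ▸ hψA.trace_mul_nonneg (hpos B hB)

end PositiveOrthogonalMaps

lemma PreservesTraceMul.isPureState_map_iff {n : ℕ}
    {ψ : Matrix (Fin n) (Fin n) ℂ →ₗ[ℝ] Matrix (Fin n) (Fin n) ℂ} (hpos : PreservesPosSemidef ψ)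
    (horth : PreservesTraceMul ψ) {ρ : Matrix (Fin n) (Fin n) ℂ} (hρ : ρ.IsHermitian) :
    IsPureState (ψ ρ) ↔ IsPureState ρ := by
  rw [isPureState_iff, isPureState_iff, horth.trace_map hpos hρ, horth ρ ρ hρ hρ]
  exact and_congr_left' ⟨horth.posSemidef_of_posSemidef_map hpos hρ, hpos ρ⟩

theorem stmt_8_general (n : ℕ)
    (ψ : Matrix (Fin n) (Fin n) ℂ →ₗ[ℝ] Matrix (Fin n) (Fin n) ℂ)
    (hpos : ∀ A : Matrix (Fin n) (Fin n) ℂ, A.PosSemidef → (ψ A).PosSemidef)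
    (horth : ∀ A B : Matrix (Fin n) (Fin n) ℂ, A.IsHermitian → B.IsHermitian →
      (ψ A * ψ B).trace = (A * B).trace) :
    Set.BijOn ψ {ρ | IsPureState ρ} {ρ | IsPureState ρ} := by
  have hpure {ρ : Matrix (Fin n) (Fin n) ℂ} (hρ : ρ.IsHermitian) :=
    PreservesTraceMul.isPureState_map_iff hpos horth hρ
  refine ⟨fun ρ hρ => (hpure hρ.1).mpr hρ,
    (PreservesTraceMul.injOn horth).mono fun ρ hρ => hρ.1, fun q hq => ?_⟩
  obtain ⟨ρ, hρ, rfl⟩ := PreservesTraceMul.surjOn hpos horth hq.1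
  exact ⟨ρ, (hpure hρ).mp hq, rfl⟩

/-- A real-linear map ψ on Hermitian operators of a
finite-dimensional Hilbert space which is positive and orthogonal for the
Hilbert–Schmidt inner product ⟨A,B⟩ = Tr(AB) induces a bijection on the set of
pure states. -/
theorem stmt_8 (n : ℕ) (hn : 0 < n)
    (ψ : Matrix (Fin n) (Fin n) ℂ →ₗ[ℝ] Matrix (Fin n) (Fin n) ℂ)
    (hherm : ∀ A : Matrix (Fin n) (Fin n) ℂ, A.IsHermitian → (ψ A).IsHermitian)
    (hpos : ∀ A : Matrix (Fin n) (Fin n) ℂ, A.PosSemidef → (ψ A).PosSemidef)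
    (horth : ∀ A B : Matrix (Fin n) (Fin n) ℂ, A.IsHermitian → B.IsHermitian →
      (ψ A * ψ B).trace = (A * B).trace) :
    Set.BijOn ψ {ρ | IsPureState ρ} {ρ | IsPureState ρ} :=
  stmt_8_general n ψ hpos horth
end

section
/- If a linear trace-preserving positive map Φ on the space of finite-rank Hermitian operators restricts to a bijection of the set of pure states onto itself, then Φ preserves the rank of every finite-rank density state: rank(Φ(ρ)) = rank(ρ). -/
/-! Spectrally, a Hermitian `ρ` is a real combination `∑ cᵢ • Pᵢ` of pure states with exactly
`rank ρ` nonzero coefficients, while any such combination with `k` nonzero coefficients has rank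
at most `k`, since a pure state is an idempotent of trace one, hence of rank one. Applying `Φ` to
the decomposition of `ρ` gives `rank (Φ ρ) ≤ rank ρ`. Conversely, decompose `Φ ρ = ∑ dⱼ • Qⱼ` and
pull back `Qⱼ = Φ P'ⱼ`: `Φ` maps the span of the pure states onto itself, so, this span being
finite-dimensional, `Φ` is injective on it and `ρ = ∑ dⱼ • P'ⱼ`, whence `rank ρ ≤ rank (Φ ρ)`. -/

open scoped ComplexOrder

/-- A density state: a positive semidefinite operator of trace 1. -/
def IsDensityState {n : ℕ} (ρ : Matrix (Fin n) (Fin n) ℂ) : Prop :=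
  ρ.PosSemidef ∧ ρ.trace = 1

theorem LinearMap.injOn_span_of_mapsTo_of_surjOn {K V : Type*} [Field K] [AddCommGroup V]
    [Module K V] [FiniteDimensional K V] {f : V →ₗ[K] V} {s : Set V}
    (hmaps : Set.MapsTo f s s) (hsurj : Set.SurjOn f s s) :
    Set.InjOn f (Submodule.span K s) := by
  set W := Submodule.span K s
  have hW : W.map f = W := by
    rw [Submodule.map_span, hmaps.image_subset.antisymm hsurj]
  let g : W →ₗ[K] W := f.restrict fun x hx => hW ▸ Submodule.mem_map_of_mem hx
  have hg : Function.Surjective g := by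
    rintro ⟨y, hy⟩
    obtain ⟨x, hx, rfl⟩ : y ∈ W.map f := hW.symm ▸ hy
    exact ⟨⟨x, hx⟩, rfl⟩
  intro x hx y hy hxy
  have hgxy : g ⟨x, hx⟩ = g ⟨y, hy⟩ := Subtype.ext hxy
  exact congrArg Subtype.val (LinearMap.injective_iff_surjective.mpr hg hgxy)

namespace Matrix

section Rank

variable {m n K : Type*} [Fintype n] [Field K]

theorem rank_add_le (A B : Matrix m n K) : (A + B).rank ≤ A.rank + B.rank := by
  unfold rank
  calc _ ≤ Module.finrank K ↥(LinearMap.range A.mulVecLin ⊔ LinearMap.range B.mulVecLin) := by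
        refine Submodule.finrank_mono ?_
        rintro _ ⟨v, rfl⟩
        rw [mulVecLin_add]
        exact Submodule.add_mem_sup ⟨v, rfl⟩ ⟨v, rfl⟩
    _ ≤ _ := Submodule.finrank_add_le_finrank_add_finrank _ _

theorem rank_sum_le {ι : Type*} (s : Finset ι) (A : ι → Matrix m n K) :
    (∑ i ∈ s, A i).rank ≤ ∑ i ∈ s, (A i).rank :=
  Finset.le_sum_of_subadditive (fun B : Matrix m n K => B.rank) rank_zero.le rank_add_le s A

theorem rank_smul_le [Fintype m] [DecidableEq m] {S : Type*} [SMul S K] [IsScalarTower S K K]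
    (c : S) (A : Matrix m n K) : (c • A).rank ≤ A.rank := by
  rw [← smul_one_smul K c A, smul_eq_diagonal_mul]
  exact rank_mul_le_right _ _

theorem trace_eq_rank_of_isIdempotentElem [DecidableEq n] {A : Matrix n n K}
    (hA : IsIdempotentElem A) : A.trace = A.rank := by
  have he : IsIdempotentElem A.toLin' := hA.map toLinAlgEquiv'
  rw [← trace_toLin'_eq, (LinearMap.IsIdempotentElem.isProj_range _ he).trace]
  rfl

end Rank

theorem IsHermitian.eq_sum_eigenvalues_smul_vecMulVec {n 𝕜 : Type*} [Fintype n] [DecidableEq n]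
    [RCLike 𝕜] {A : Matrix n n 𝕜} (hA : A.IsHermitian) :
    A = ∑ i, hA.eigenvalues i •
      vecMulVec ⇑(hA.eigenvectorBasis i) (star ⇑(hA.eigenvectorBasis i)) := by
  conv_lhs => rw [hA.spectral_theorem]
  ext a b
  simp only [Unitary.conjStarAlgAut_apply, mul_apply, diagonal_apply, Function.comp_apply,
    sum_apply, smul_apply, vecMulVec_apply, Pi.star_apply, star_apply,
    hA.eigenvectorUnitary_apply, mul_ite, mul_zero, Finset.sum_ite_eq', Finset.mem_univ, if_true]
  refine Finset.sum_congr rfl fun i _ => ?_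
  rw [RCLike.real_smul_eq_coe_mul]
  ring

end Matrix

open Matrix

theorem isPureState_vecMulVec {n : ℕ} {v : Fin n → ℂ} (hv : star v ⬝ᵥ v = 1) :
    IsPureState (vecMulVec v (star v)) := by
  refine ⟨(posSemidef_vecMulVec_self_star v).isHermitian, ?_, ?_⟩
  · rw [vecMulVec_mul_vecMulVec, hv, one_smul]
  · rw [trace_vecMulVec, dotProduct_comm, hv]

theorem IsPureState.rank_eq_one {n : ℕ} {ρ : Matrix (Fin n) (Fin n) ℂ} (hρ : IsPureState ρ) :
    ρ.rank = 1 := by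
  have h := trace_eq_rank_of_isIdempotentElem hρ.2.1
  rw [hρ.2.2] at h
  exact_mod_cast h.symm

theorem Matrix.IsHermitian.exists_eq_sum_smul_pureState {n : ℕ}
    {A : Matrix (Fin n) (Fin n) ℂ} (hA : A.IsHermitian) :
    ∃ (c : Fin n → ℝ) (P : Fin n → Matrix (Fin n) (Fin n) ℂ), (∀ i, IsPureState (P i)) ∧
      A = ∑ i, c i • P i ∧ A.rank = (Finset.univ.filter fun i => c i ≠ 0).card := by
  refine ⟨hA.eigenvalues, _, fun i => isPureState_vecMulVec ?_,
    hA.eq_sum_eigenvalues_smul_vecMulVec, ?_⟩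
  · rw [dotProduct_comm, ← EuclideanSpace.inner_eq_star_dotProduct]
    exact inner_self_eq_one_of_norm_eq_one (hA.eigenvectorBasis.orthonormal.1 i)
  · rw [hA.rank_eq_card_non_zero_eigs, Fintype.card_subtype]

theorem rank_sum_smul_pureState_le {n : ℕ} {ι : Type*} [Fintype ι] (c : ι → ℝ)
    {P : ι → Matrix (Fin n) (Fin n) ℂ} (hP : ∀ i, IsPureState (P i)) :
    (∑ i, c i • P i).rank ≤ (Finset.univ.filter fun i => c i ≠ 0).card := by
  rw [← Finset.sum_filter_of_ne (p := fun i => c i ≠ 0) fun i _ hi hc => hi (by rw [hc, zero_smul]),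
    Finset.card_eq_sum_ones]
  refine (rank_sum_le _ _).trans (Finset.sum_le_sum fun i _ => ?_)
  exact (rank_smul_le _ _).trans (hP i).rank_eq_one.le

theorem stmt_9_general (n : ℕ)
    (Φ : Matrix (Fin n) (Fin n) ℂ →ₗ[ℝ] Matrix (Fin n) (Fin n) ℂ)
    (hbij : Set.BijOn Φ {ρ | IsPureState ρ} {ρ | IsPureState ρ}) :
    ∀ ρ : Matrix (Fin n) (Fin n) ℂ, IsDensityState ρ → (Φ ρ).rank = ρ.rank := by
  intro ρ hρ
  obtain ⟨c, P, hP, hρ_eq, hρ_rank⟩ := hρ.1.1.exists_eq_sum_smul_pureState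
  have hΦρ_eq : Φ ρ = ∑ i, c i • Φ (P i) := by simp only [hρ_eq, map_sum, map_smul]
  have hΦρ : (Φ ρ).IsHermitian := hΦρ_eq ▸ isSelfAdjoint_sum _ fun i _ =>
    (hbij.mapsTo (hP i)).1.smul (IsSelfAdjoint.all (c i))
  obtain ⟨d, Q, hQ, hΦρ_eq', hΦρ_rank⟩ := hΦρ.exists_eq_sum_smul_pureState
  choose P' hP' hΦP' using fun j => hbij.surjOn (hQ j)
  have hρ_eq' : ρ = ∑ j, d j • P' j := by
    refine LinearMap.injOn_span_of_mapsTo_of_surjOn hbij.mapsTo hbij.surjOn ?_ ?_ ?_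
    · rw [hρ_eq]
      exact Submodule.sum_mem _ fun i _ => Submodule.smul_mem _ _ (Submodule.subset_span (hP i))
    · exact Submodule.sum_mem _ fun j _ => Submodule.smul_mem _ _ (Submodule.subset_span (hP' j))
    · simp only [hΦρ_eq', map_sum, map_smul, hΦP']
  refine le_antisymm ?_ ?_
  · rw [hΦρ_eq, hρ_rank]
    exact rank_sum_smul_pureState_le c fun i => hbij.mapsTo (hP i)
  · rw [hΦρ_rank, hρ_eq']
    exact rank_sum_smul_pureState_le d hP'

/-- A linear trace-preserving positive map Φ on Hermitian
operators which restricts to a bijection of the set of pure states onto itself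
preserves the rank of every density state. -/
theorem stmt_9 (n : ℕ) (hn : 0 < n)
    (Φ : Matrix (Fin n) (Fin n) ℂ →ₗ[ℝ] Matrix (Fin n) (Fin n) ℂ)
    (htr : ∀ A, (Φ A).trace = A.trace)
    (hpos : ∀ A : Matrix (Fin n) (Fin n) ℂ, A.PosSemidef → (Φ A).PosSemidef)
    (hbij : Set.BijOn Φ {ρ | IsPureState ρ} {ρ | IsPureState ρ}) :
    ∀ ρ : Matrix (Fin n) (Fin n) ℂ, IsDensityState ρ → (Φ ρ).rank = ρ.rank :=
  stmt_9_general n Φ hbij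
end

section
/- If a bijection ψ of the set of pure states of a Hilbert space extends to a linear trace-preserving map on finite-rank Hermitian operators (i.e., ψ is affine), then ψ preserves transition probabilities: Tr(ψ(ρ₁)ψ(ρ₂)) = Tr(ρ₁ρ₂) for all pure states ρ₁, ρ₂. -/
open scoped ComplexOrder

/-!
Pure states are the matrices `|x⟩⟨x|` with `x` a unit vector, and
`Tr(|x⟩⟨x| |y⟩⟨y|) = |⟨x, y⟩|²`. The largest eigenvalue of `|x⟩⟨x| + |y⟩⟨y|` is `1 + |⟨x, y⟩|`,
and it can be read off the positive cone alone: it is the largest `c` such that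
`|x⟩⟨x| + |y⟩⟨y| - c R ≥ 0` for some pure state `R`. Positive matrices are exactly the nonnegative
combinations of pure states, so `Φ` preserves positivity; since `Φ` permutes the pure states, it is
also injective on their (finite-dimensional) span, so positivity is reflected there as well. Hence
`Φ` preserves this eigenvalue, and with it `|⟨x, y⟩|`.
-/

open Matrix
open scoped InnerProductSpace

section InnerProductSpace

variable {E : Type*} [NormedAddCommGroup E] [InnerProductSpace ℂ E]

lemma sq_norm_inner_add_sq_norm_inner_le {x y u : E} (hx : ‖x‖ = 1) (hy : ‖y‖ = 1)
    (hu : ‖u‖ = 1) : ‖⟪x, u⟫_ℂ‖ ^ 2 + ‖⟪y, u⟫_ℂ‖ ^ 2 ≤ 1 + ‖⟪x, y⟫_ℂ‖ := by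
  set α := ⟪x, u⟫_ℂ with hα
  set β := ⟪y, u⟫_ℂ with hβ
  set t := ‖α‖ ^ 2 + ‖β‖ ^ 2
  set w := α • x + β • y
  have hwu : ⟪w, u⟫_ℂ = t := by
    simp only [w, t, inner_add_left, inner_smul_left, ← hα, ← hβ, Complex.conj_mul']
    push_cast; ring
  have hw : ‖w‖ ^ 2 ≤ t * (1 + ‖⟪x, y⟫_ℂ‖) := by
    have hre : RCLike.re ⟪α • x, β • y⟫_ℂ ≤ ‖α‖ * ‖β‖ * ‖⟪x, y⟫_ℂ‖ := by
      refine (RCLike.re_le_norm _).trans_eq ?_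
      rw [inner_smul_left, inner_smul_right, norm_mul, norm_mul, RCLike.norm_conj, mul_assoc]
    rw [norm_add_sq (𝕜 := ℂ), norm_smul, norm_smul, hx, hy]
    nlinarith [sq_nonneg (‖α‖ - ‖β‖), norm_nonneg ⟪x, y⟫_ℂ]
  have hcs : t ^ 2 ≤ ‖w‖ ^ 2 := by
    have h := norm_inner_le_norm (𝕜 := ℂ) w u
    rw [hwu, hu, mul_one, Complex.norm_of_nonneg (by positivity)] at h
    exact pow_le_pow_left₀ (by positivity) h 2
  nlinarith [norm_nonneg ⟪x, y⟫_ℂ, sq_nonneg (‖α‖), sq_nonneg ‖β‖]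

lemma exists_norm_eq_one_forall_sq_norm_inner_le {x y : E} (hx : ‖x‖ = 1) (hy : ‖y‖ = 1) :
    ∃ u : E, ‖u‖ = 1 ∧
      ∀ z, (1 + ‖⟪x, y⟫_ℂ‖) * ‖⟪u, z⟫_ℂ‖ ^ 2 ≤ ‖⟪x, z⟫_ℂ‖ ^ 2 + ‖⟪y, z⟫_ℂ‖ ^ 2 := by
  set s := ‖⟪x, y⟫_ℂ‖
  -- rotate `x` by a phase so that its inner product with `y` becomes the real number `s`
  set τ := Complex.exp (Complex.arg ⟪x, y⟫_ℂ * Complex.I)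
  have hτ : ‖τ‖ = 1 := Complex.norm_exp_ofReal_mul_I _
  set v := τ • x + y
  have hv : ‖v‖ ^ 2 = 2 * (1 + s) := by
    have : ⟪τ • x, y⟫_ℂ = s := by
      conv_lhs => rw [inner_smul_left, ← Complex.norm_mul_exp_arg_mul_I ⟪x, y⟫_ℂ, ← mul_assoc,
        mul_comm _ (s : ℂ), mul_assoc, Complex.conj_mul', hτ]
      simp
    rw [norm_add_sq (𝕜 := ℂ), this, norm_smul, hτ, hx, hy]
    simp; ring
  have hs : 0 < 1 + s := by positivity
  have hv0 : v ≠ 0 := by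
    intro h; rw [h, norm_zero] at hv; linarith
  refine ⟨(‖v‖⁻¹ : ℂ) • v, norm_smul_inv_norm hv0, fun z => ?_⟩
  have hxz : ‖⟪τ • x, z⟫_ℂ‖ = ‖⟪x, z⟫_ℂ‖ := by
    rw [inner_smul_left, norm_mul, RCLike.norm_conj, hτ, one_mul]
  have hvz : ‖⟪v, z⟫_ℂ‖ ≤ ‖⟪x, z⟫_ℂ‖ + ‖⟪y, z⟫_ℂ‖ := by
    rw [inner_add_left, ← hxz]; exact norm_add_le _ _
  have key : (1 + s) * ‖⟪(‖v‖⁻¹ : ℂ) • v, z⟫_ℂ‖ ^ 2 = ‖⟪v, z⟫_ℂ‖ ^ 2 / 2 := by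
    rw [inner_smul_left, norm_mul, RCLike.norm_conj, norm_inv, Complex.norm_real, norm_norm,
      mul_pow, inv_pow, hv]
    field_simp
  rw [key]
  nlinarith [hvz, sq_nonneg (‖⟪x, z⟫_ℂ‖ - ‖⟪y, z⟫_ℂ‖), norm_nonneg ⟪v, z⟫_ℂ]

end InnerProductSpace

section KetBra

variable {ι : Type*}

noncomputable def ketBra (x : EuclideanSpace ℂ ι) : Matrix ι ι ℂ :=
  vecMulVec x.ofLp (star x.ofLp)

lemma isHermitian_ketBra (x : EuclideanSpace ℂ ι) : (ketBra x).IsHermitian := by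
  simp [ketBra, IsHermitian, conjTranspose_vecMulVec]

variable [Fintype ι]

lemma ketBra_smul (c : ℂ) (x : EuclideanSpace ℂ ι) :
    ketBra (c • x) = (‖c‖ ^ 2 : ℝ) • ketBra x := by
  ext i j
  simp [ketBra, vecMulVec_apply, Complex.real_smul, ← Complex.mul_conj']
  ring

lemma ketBra_mulVec (x : EuclideanSpace ℂ ι) (z : ι → ℂ) :
    ketBra x *ᵥ z = ⟪x, WithLp.toLp 2 z⟫_ℂ • x.ofLp := by
  rw [ketBra, vecMulVec_mulVec, op_smul_eq_smul, EuclideanSpace.inner_toLp_toLp, dotProduct_comm]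

lemma star_dotProduct_ketBra_mulVec (x : EuclideanSpace ℂ ι) (z : ι → ℂ) :
    star z ⬝ᵥ (ketBra x *ᵥ z) = (‖⟪x, WithLp.toLp 2 z⟫_ℂ‖ : ℂ) ^ 2 := by
  rw [ketBra_mulVec, dotProduct_smul, smul_eq_mul, ← Complex.mul_conj', star_dotProduct,
    EuclideanSpace.inner_eq_star_dotProduct, dotProduct_comm]
  rfl

lemma ketBra_mul_ketBra (x y : EuclideanSpace ℂ ι) :
    ketBra x * ketBra y = ⟪x, y⟫_ℂ • vecMulVec x.ofLp (star y.ofLp) := by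
  rw [ketBra, ketBra, vecMulVec_mul_vecMulVec, vecMulVec_smul,
    EuclideanSpace.inner_eq_star_dotProduct, dotProduct_comm]

lemma trace_ketBra_mul_ketBra (x y : EuclideanSpace ℂ ι) :
    (ketBra x * ketBra y).trace = (‖⟪x, y⟫_ℂ‖ : ℂ) ^ 2 := by
  rw [ketBra_mul_ketBra, trace_smul, trace_vecMulVec, smul_eq_mul,
    ← EuclideanSpace.inner_eq_star_dotProduct, ← inner_conj_symm y, Complex.mul_conj']

lemma trace_ketBra (x : EuclideanSpace ℂ ι) : (ketBra x).trace = (‖x‖ : ℂ) ^ 2 := by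
  rw [ketBra, trace_vecMulVec, ← EuclideanSpace.inner_eq_star_dotProduct]
  exact inner_self_eq_norm_sq_to_K x

lemma isPureState_ketBra {n : ℕ} {x : EuclideanSpace ℂ (Fin n)} (hx : ‖x‖ = 1) :
    IsPureState (ketBra x) := by
  refine ⟨isHermitian_ketBra x, ?_, by rw [trace_ketBra, hx]; simp⟩
  rw [ketBra_mul_ketBra, inner_self_eq_norm_sq_to_K, hx]
  simp [ketBra]

lemma posSemidef_sub_ketBra {ρ : Matrix ι ι ℂ} (hρ : ρ.IsHermitian) (hρρ : ρ * ρ = ρ)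
    {x : EuclideanSpace ℂ ι} (hx : ‖x‖ = 1) (hρx : ρ *ᵥ x.ofLp = x.ofLp) :
    (ρ - ketBra x).PosSemidef := by
  refine .of_dotProduct_mulVec_nonneg (hρ.sub (isHermitian_ketBra x)) fun w => ?_
  set v := WithLp.toLp 2 (ρ *ᵥ w)
  have hquad : star w ⬝ᵥ (ρ *ᵥ w) = (‖v‖ : ℂ) ^ 2 :=
    calc star w ⬝ᵥ (ρ *ᵥ w) = star w ⬝ᵥ ((ρᴴ * ρ) *ᵥ w) := by rw [hρ.eq, hρρ]
      _ = star (ρ *ᵥ w) ⬝ᵥ (ρ *ᵥ w) := by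
        rw [← mulVec_mulVec, dotProduct_mulVec, vecMul_conjTranspose, star_star]
      _ = ⟪v, v⟫_ℂ := dotProduct_comm _ _
      _ = (‖v‖ : ℂ) ^ 2 := inner_self_eq_norm_sq_to_K v
  have hxw : ⟪x, WithLp.toLp 2 w⟫_ℂ = ⟪x, v⟫_ℂ :=
    calc ⟪x, WithLp.toLp 2 w⟫_ℂ = star (ρ *ᵥ x.ofLp) ⬝ᵥ w := by
          rw [hρx, EuclideanSpace.inner_eq_star_dotProduct, dotProduct_comm]
      _ = star x.ofLp ⬝ᵥ (ρ *ᵥ w) := by rw [star_mulVec, hρ.eq, dotProduct_mulVec]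
      _ = ⟪x, v⟫_ℂ := dotProduct_comm _ _
  have hcs : ‖⟪x, v⟫_ℂ‖ ≤ ‖v‖ := by simpa [hx] using norm_inner_le_norm (𝕜 := ℂ) x v
  rw [sub_mulVec, dotProduct_sub, star_dotProduct_ketBra_mulVec, hquad, hxw, sub_nonneg]
  exact_mod_cast pow_le_pow_left₀ (norm_nonneg _) hcs 2

lemma posSemidef_ketBra_add_ketBra_sub_smul_iff {x y u : EuclideanSpace ℂ ι} {c : ℝ} :
    (ketBra x + ketBra y - c • ketBra u).PosSemidef ↔
      ∀ z, c * ‖⟪u, z⟫_ℂ‖ ^ 2 ≤ ‖⟪x, z⟫_ℂ‖ ^ 2 + ‖⟪y, z⟫_ℂ‖ ^ 2 := by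
  have hherm : (ketBra x + ketBra y - c • ketBra u).IsHermitian :=
    ((isHermitian_ketBra x).add (isHermitian_ketBra y)).sub
      ((isHermitian_ketBra u).smul (IsSelfAdjoint.all c))
  have hquad (z : EuclideanSpace ℂ ι) :
      star z.ofLp ⬝ᵥ ((ketBra x + ketBra y - c • ketBra u) *ᵥ z.ofLp)
        = ((‖⟪x, z⟫_ℂ‖ ^ 2 + ‖⟪y, z⟫_ℂ‖ ^ 2 - c * ‖⟪u, z⟫_ℂ‖ ^ 2 : ℝ) : ℂ) := by
    rw [sub_mulVec, add_mulVec, smul_mulVec, dotProduct_sub, dotProduct_add, dotProduct_smul,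
      star_dotProduct_ketBra_mulVec, star_dotProduct_ketBra_mulVec, star_dotProduct_ketBra_mulVec,
      Complex.real_smul]
    push_cast
    rfl
  rw [posSemidef_iff_dotProduct_mulVec, and_iff_right hherm]
  refine ⟨fun h z => ?_, fun h z => ?_⟩
  · have := h z.ofLp
    rw [hquad, Complex.zero_le_real] at this
    linarith
  · rw [show z = (WithLp.toLp 2 z).ofLp from rfl, hquad, Complex.zero_le_real, sub_nonneg]
    exact h _

end KetBra

variable {n : ℕ}

lemma IsPureState.posSemidef {ρ : Matrix (Fin n) (Fin n) ℂ} (h : IsPureState ρ) :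
    ρ.PosSemidef := by
  obtain ⟨hρ, hρρ, -⟩ := h
  simpa [hρ.eq, hρρ] using posSemidef_conjTranspose_mul_self ρ

lemma IsPureState.exists_eq_ketBra {ρ : Matrix (Fin n) (Fin n) ℂ} (h : IsPureState ρ) :
    ∃ x : EuclideanSpace ℂ (Fin n), ‖x‖ = 1 ∧ ρ = ketBra x := by
  obtain ⟨hρ, hρρ, htr⟩ := h
  obtain ⟨z, hz⟩ : ∃ z, ρ *ᵥ z ≠ 0 := by
    by_contra! h0
    have : ρ = 0 := ext_iff_mulVec.2 fun v => by simp [h0]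
    simp [this] at htr
  set v := WithLp.toLp 2 (ρ *ᵥ z)
  have hv : v ≠ 0 := by simpa [v] using hz
  set x := (‖v‖⁻¹ : ℂ) • v
  have hx : ‖x‖ = 1 := norm_smul_inv_norm hv
  have hρx : ρ *ᵥ x.ofLp = x.ofLp := by simp [x, v, mulVec_smul, mulVec_mulVec, hρρ]
  refine ⟨x, hx, ?_⟩
  have hD := posSemidef_sub_ketBra hρ hρρ hx hρx
  rw [← sub_eq_zero, ← hD.trace_eq_zero_iff, trace_sub, htr, trace_ketBra, hx]
  simp

lemma posSemidef_iff_mem_hull_isPureState {A : Matrix (Fin n) (Fin n) ℂ} :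
    A.PosSemidef ↔ A ∈ PointedCone.hull ℝ {ρ | IsPureState ρ} := by
  constructor
  · intro hA
    obtain ⟨m, v, rfl⟩ := posSemidef_iff_eq_sum_vecMulVec.1 hA
    refine Submodule.sum_mem _ fun i _ => ?_
    set w := WithLp.toLp 2 (v i)
    rcases eq_or_ne w 0 with hw | hw
    · rw [WithLp.toLp_eq_zero] at hw
      simp [hw]
    · have hv : vecMulVec (v i) (star (v i)) =
          (⟨‖w‖ ^ 2, by positivity⟩ : {c : ℝ // 0 ≤ c}) • ketBra ((‖w‖⁻¹ : ℂ) • w) := by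
        rw [Nonneg.mk_smul, ketBra_smul, smul_smul, norm_inv, Complex.norm_real, norm_norm,
          inv_pow, mul_inv_cancel₀ (by positivity), one_smul]
        rfl
      rw [hv]
      exact Submodule.smul_mem _ _
        (Submodule.subset_span (isPureState_ketBra (norm_smul_inv_norm hw)))
  · intro hA
    induction hA using Submodule.span_induction with
    | mem ρ hρ => exact hρ.posSemidef
    | zero => exact .zero
    | add _ _ _ _ h₁ h₂ => exact h₁.add h₂
    | smul c _ _ h => rw [← Nonneg.coe_smul]; exact h.smul c.2

lemma LinearMap.injOn_span_of_image_eq {K V : Type*} [DivisionRing K] [AddCommGroup V]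
    [Module K V] [FiniteDimensional K V] {f : V →ₗ[K] V} {s : Set V} (h : f '' s = s) :
    Set.InjOn f (Submodule.span K s) := by
  set S := Submodule.span K s
  have hS : S.map f = S := by rw [Submodule.map_span, h]
  set g : S →ₗ[K] S := f.restrict fun v hv => hS ▸ Submodule.mem_map_of_mem hv
  have hg : Function.Surjective g := by
    rintro ⟨v, hv⟩
    obtain ⟨u, hu, rfl⟩ := Submodule.mem_map.1 (hS.symm ▸ hv)
    exact ⟨⟨u, hu⟩, rfl⟩
  have hinj : Function.Injective g := LinearMap.injective_iff_surjective.2 hg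
  intro u hu v hv huv
  exact Subtype.ext_iff.1 (hinj (Subtype.ext huv : g ⟨u, hu⟩ = g ⟨v, hv⟩))

lemma PointedCone.map_hull {E F : Type*} [AddCommGroup E] [Module ℝ E] [AddCommGroup F]
    [Module ℝ F] (f : E →ₗ[ℝ] F) (s : Set E) :
    (PointedCone.hull ℝ s).map f = PointedCone.hull ℝ (f '' s) :=
  Submodule.map_span _ s

section PureStateMap

variable {Φ : Matrix (Fin n) (Fin n) ℂ →ₗ[ℝ] Matrix (Fin n) (Fin n) ℂ}

lemma Matrix.PosSemidef.map_of_mapsTo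
    (hΦ : Set.MapsTo Φ {ρ | IsPureState ρ} {ρ | IsPureState ρ}) {A : Matrix (Fin n) (Fin n) ℂ}
    (hA : A.PosSemidef) : (Φ A).PosSemidef := by
  rw [posSemidef_iff_mem_hull_isPureState] at hA ⊢
  exact Submodule.span_mono hΦ.image_subset ((PointedCone.map_hull Φ _).le ⟨A, hA, rfl⟩)

lemma Matrix.PosSemidef.of_map_of_bijOn
    (hΦ : Set.BijOn Φ {ρ | IsPureState ρ} {ρ | IsPureState ρ}) {A : Matrix (Fin n) (Fin n) ℂ}
    (hA : A ∈ Submodule.span ℝ {ρ | IsPureState ρ})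
    (hΦA : (Φ A).PosSemidef) : A.PosSemidef := by
  rw [posSemidef_iff_mem_hull_isPureState, ← hΦ.image_eq, ← PointedCone.map_hull] at hΦA
  obtain ⟨N, hN, hNA⟩ := hΦA
  rw [← LinearMap.injOn_span_of_image_eq hΦ.image_eq (PointedCone.hull_le_span ℝ _ hN) hA hNA]
  exact posSemidef_iff_mem_hull_isPureState.2 hN

end PureStateMap

/-- For positive semidefinite `A`, the supremum of these weights is its largest eigenvalue. -/
def pureWeights (A : Matrix (Fin n) (Fin n) ℂ) : Set ℝ :=
  {c | ∃ R, IsPureState R ∧ (A - c • R).PosSemidef}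

lemma isGreatest_pureWeights_ketBra_add_ketBra {x y : EuclideanSpace ℂ (Fin n)} (hx : ‖x‖ = 1)
    (hy : ‖y‖ = 1) : IsGreatest (pureWeights (ketBra x + ketBra y)) (1 + ‖⟪x, y⟫_ℂ‖) := by
  refine ⟨?_, ?_⟩
  · obtain ⟨u, hu, hle⟩ := exists_norm_eq_one_forall_sq_norm_inner_le hx hy
    exact ⟨ketBra u, isPureState_ketBra hu, posSemidef_ketBra_add_ketBra_sub_smul_iff.2 hle⟩
  · rintro c ⟨R, hR, hpos⟩
    obtain ⟨u, hu, rfl⟩ := hR.exists_eq_ketBra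
    have h := posSemidef_ketBra_add_ketBra_sub_smul_iff.1 hpos u
    simp only [inner_self_eq_norm_sq_to_K, hu, RCLike.ofReal_one, one_pow, norm_one, mul_one] at h
    linarith [sq_norm_inner_add_sq_norm_inner_le hx hy hu]

lemma pureWeights_map_of_bijOn {Φ : Matrix (Fin n) (Fin n) ℂ →ₗ[ℝ] Matrix (Fin n) (Fin n) ℂ}
    (hΦ : Set.BijOn Φ {ρ | IsPureState ρ} {ρ | IsPureState ρ}) {A : Matrix (Fin n) (Fin n) ℂ}
    (hA : A ∈ Submodule.span ℝ {ρ | IsPureState ρ}) : pureWeights (Φ A) = pureWeights A := by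
  ext c
  constructor
  · rintro ⟨R', hR', hpos⟩
    obtain ⟨R, hR, rfl⟩ := hΦ.surjOn hR'
    refine ⟨R, hR, PosSemidef.of_map_of_bijOn hΦ ?_ ?_⟩
    · exact sub_mem hA (Submodule.smul_mem _ _ (Submodule.subset_span hR))
    · rwa [map_sub, map_smul]
  · rintro ⟨R, hR, hpos⟩
    exact ⟨Φ R, hΦ.mapsTo hR, by simpa using PosSemidef.map_of_mapsTo hΦ.mapsTo hpos⟩

theorem stmt_11_general (n : ℕ)
    (Φ : Matrix (Fin n) (Fin n) ℂ →ₗ[ℝ] Matrix (Fin n) (Fin n) ℂ)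
    (hbij : Set.BijOn Φ {ρ | IsPureState ρ} {ρ | IsPureState ρ}) :
    ∀ ρ₁ ρ₂ : Matrix (Fin n) (Fin n) ℂ, IsPureState ρ₁ → IsPureState ρ₂ →
      (Φ ρ₁ * Φ ρ₂).trace = (ρ₁ * ρ₂).trace := by
  intro ρ₁ ρ₂ h₁ h₂
  obtain ⟨x', hx', hΦx⟩ := (hbij.mapsTo h₁).exists_eq_ketBra
  obtain ⟨y', hy', hΦy⟩ := (hbij.mapsTo h₂).exists_eq_ketBra
  obtain ⟨x, hx, rfl⟩ := h₁.exists_eq_ketBra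
  obtain ⟨y, hy, rfl⟩ := h₂.exists_eq_ketBra
  have hweights := pureWeights_map_of_bijOn hbij
    (add_mem (Submodule.subset_span h₁) (Submodule.subset_span h₂))
  rw [map_add, hΦx, hΦy] at hweights
  have hnorm : ‖⟪x', y'⟫_ℂ‖ = ‖⟪x, y⟫_ℂ‖ := by
    have := (isGreatest_pureWeights_ketBra_add_ketBra hx' hy').unique
      (hweights ▸ isGreatest_pureWeights_ketBra_add_ketBra hx hy)
    linarith
  rw [hΦx, hΦy, trace_ketBra_mul_ketBra, trace_ketBra_mul_ketBra, hnorm]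

/-- If a bijection of the set of pure states extends to a linear
trace-preserving map Φ on Hermitian operators, then it preserves transition
probabilities: Tr(Φ(ρ₁)Φ(ρ₂)) = Tr(ρ₁ρ₂) for all pure states ρ₁, ρ₂. -/
theorem stmt_11 (n : ℕ) (hn : 0 < n)
    (Φ : Matrix (Fin n) (Fin n) ℂ →ₗ[ℝ] Matrix (Fin n) (Fin n) ℂ)
    (htr : ∀ A, (Φ A).trace = A.trace)
    (hbij : Set.BijOn Φ {ρ | IsPureState ρ} {ρ | IsPureState ρ}) :
    ∀ ρ₁ ρ₂ : Matrix (Fin n) (Fin n) ℂ, IsPureState ρ₁ → IsPureState ρ₂ →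
      (Φ ρ₁ * Φ ρ₂).trace = (ρ₁ * ρ₂).trace :=
  stmt_11_general n Φ hbij
end

section
/- Let A be a completely positive map on gl(H), dim H = n, given by Kraus operators Aρ = Σᵢ Vᵢ†ρVᵢ. If A is invertible and A⁻¹ is also completely positive, then A has a single Kraus operator: Aρ = V†ρV with V invertible. -/
open scoped Matrix


lemma key_inner {n : ℕ} {K : Type*} [Fintype K] (N : K → Matrix (Fin n) (Fin n) ℂ)
    (h : ∀ ρ, ∑ k, (N k)ᴴ * ρ * N k = ρ) (a b p q : Fin n) :
    ∑ k, (starRingEnd ℂ) (N k a p) * (N k b q) = if a = p ∧ b = q then 1 else 0 := by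
  have := congrFun (congrFun (h (Matrix.single a b 1)) p) q
  simp only [Matrix.sum_apply, Matrix.mul_apply, Matrix.conjTranspose_apply,
    Matrix.single, Matrix.of_apply, ite_and, ite_mul, mul_ite, one_mul, mul_one,
    zero_mul, mul_zero, Finset.sum_ite_eq, Finset.sum_ite_eq', Finset.mem_univ, if_true] at this
  rw [ite_and]
  exact this

lemma sum_normSq_zero {K : Type*} [Fintype K] (z : K → ℂ)
    (h : ∑ k, (starRingEnd ℂ) (z k) * z k = 0) : ∀ k, z k = 0 := by
  have h2 : ∑ k, Complex.normSq (z k) = 0 := by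
    have : ((∑ k, Complex.normSq (z k) : ℝ) : ℂ) = 0 := by
      push_cast
      simpa [Complex.normSq_eq_conj_mul_self] using h
    exact_mod_cast this
  intro k
  have := (Finset.sum_eq_zero_iff_of_nonneg (fun i _ => Complex.normSq_nonneg (z i))).mp h2
    k (Finset.mem_univ k)
  exact Complex.normSq_eq_zero.mp this

lemma key {n : ℕ} {K : Type*} [Fintype K] (N : K → Matrix (Fin n) (Fin n) ℂ)
    (h : ∀ ρ, ∑ k, (N k)ᴴ * ρ * N k = ρ) :
    ∃ c : K → ℂ, ∀ k, N k = c k • (1 : Matrix (Fin n) (Fin n) ℂ) := by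
  rcases n with _ | m
  · exact ⟨fun _ => 0, fun k => Matrix.ext fun i => i.elim0⟩
  have hoff : ∀ (k : K) (a p : Fin (m+1)), a ≠ p → N k a p = 0 := by
    intro k a p hap
    have h1 := key_inner N h a a p p
    rw [if_neg (by tauto)] at h1
    exact sum_normSq_zero _ h1 k
  have hdiag : ∀ (k : K) (a b : Fin (m+1)), N k a a = N k b b := by
    intro k a b
    have haa := key_inner N h a a a a
    have hbb := key_inner N h b b b b
    have hab := key_inner N h a b a b
    have hba := key_inner N h b a b a
    rw [if_pos ⟨rfl, rfl⟩] at haa hbb hab hba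
    have key0 : ∑ j, (starRingEnd ℂ) (N j a a - N j b b) * (N j a a - N j b b) = 0 := by
      have expand : ∀ j : K, (starRingEnd ℂ) (N j a a - N j b b) * (N j a a - N j b b)
          = (starRingEnd ℂ) (N j a a) * N j a a - (starRingEnd ℂ) (N j a a) * N j b b
            - (starRingEnd ℂ) (N j b b) * N j a a + (starRingEnd ℂ) (N j b b) * N j b b := by
        intro j; ring_nf; simp [map_sub]; ring
      rw [Finset.sum_congr rfl (fun j _ => expand j)]
      simp only [Finset.sum_add_distrib, Finset.sum_sub_distrib, haa, hbb, hab, hba]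
      ring
    exact sub_eq_zero.mp (sum_normSq_zero _ key0 k)
  refine ⟨fun k => N k 0 0, fun k => ?_⟩
  ext p q
  by_cases hpq : p = q
  · subst hpq
    simp [Matrix.smul_apply, Matrix.one_apply, hdiag k p 0]
  · simp [Matrix.smul_apply, Matrix.one_apply, hpq, hoff k p q hpq]

/-- If a completely positive map A (given in Kraus form) on
gl(H), dim H = n, is invertible and its inverse is also completely positive
(i.e. also has a Kraus form), then A is a single Kraus map Aρ = V†ρV with V
invertible. -/
theorem stmt_14 (n s : ℕ)
    (A : Matrix (Fin n) (Fin n) ℂ →ₗ[ℂ] Matrix (Fin n) (Fin n) ℂ)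
    (V : Fin s → Matrix (Fin n) (Fin n) ℂ)
    (hA : ∀ ρ, A ρ = ∑ i, (V i)ᴴ * ρ * V i)
    (B : Matrix (Fin n) (Fin n) ℂ →ₗ[ℂ] Matrix (Fin n) (Fin n) ℂ)
    (hBA : B ∘ₗ A = LinearMap.id) (hAB : A ∘ₗ B = LinearMap.id)
    (hBCP : ∃ (s' : ℕ) (W : Fin s' → Matrix (Fin n) (Fin n) ℂ),
      ∀ ρ, B ρ = ∑ j, (W j)ᴴ * ρ * W j) :
    ∃ V₀ : Matrix (Fin n) (Fin n) ℂ, IsUnit V₀ ∧ ∀ ρ, A ρ = V₀ᴴ * ρ * V₀ := by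
  rcases n with _ | m
  · exact ⟨1, isUnit_one, fun ρ => Subsingleton.elim _ _⟩
  obtain ⟨s', W, hB⟩ := hBCP
  -- composed Kraus identity
  have hcomp : ∀ ρ : Matrix (Fin (m+1)) (Fin (m+1)) ℂ,
      ∑ jk : Fin s' × Fin s, (W jk.1 * V jk.2)ᴴ * ρ * (W jk.1 * V jk.2) = ρ := by
    intro ρ
    have h0 : A (B ρ) = ρ := by
      have := congrArg (fun f => f ρ) hAB
      simpa using this
    rw [hA, hB] at h0
    rw [show (∑ jk : Fin s' × Fin s, (W jk.1 * V jk.2)ᴴ * ρ * (W jk.1 * V jk.2))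
        = ∑ i, ((V i)ᴴ * ∑ j, (W j)ᴴ * ρ * W j) * V i from ?_, h0]
    rw [Fintype.sum_prod_type, Finset.sum_comm]
    apply Finset.sum_congr rfl
    intro i _
    rw [Finset.mul_sum, Finset.sum_mul]
    apply Finset.sum_congr rfl
    intro j _
    simp only [Matrix.conjTranspose_mul, mul_assoc]
  obtain ⟨c, hc⟩ := key _ hcomp
  -- some c is nonzero
  have hex : ∃ jk : Fin s' × Fin s, c jk ≠ 0 := by
    by_contra hall
    push_neg at hall
    have := hcomp 1
    rw [Finset.sum_eq_zero (fun jk _ => by rw [hc jk, hall jk]; simp)] at this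
    have h00 := congrFun (congrFun this 0) 0
    simp [Matrix.one_apply] at h00
  obtain ⟨⟨j₀, i₀⟩, hc0⟩ := hex
  have hWV : W j₀ * V i₀ = c (j₀, i₀) • 1 := hc (j₀, i₀)
  -- W j₀ is a unit
  have hdetW : IsUnit (W j₀).det := by
    have : (W j₀).det * (V i₀).det  = c (j₀, i₀) ^ (m+1) := by
      rw [← Matrix.det_mul, hWV, Matrix.det_smul, Matrix.det_one]
      simp [Finset.card_univ]
    rw [isUnit_iff_ne_zero]
    intro h0
    rw [h0, zero_mul] at this
    exact pow_ne_zero _ hc0 this.symm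
  set M := (W j₀)⁻¹ with hM
  have hMW : M * W j₀ = 1 := Matrix.nonsing_inv_mul _ hdetW
  have hVi : ∀ i, V i = c (j₀, i) • M := by
    intro i
    have h1 : W j₀ * V i = c (j₀, i) • 1 := hc (j₀, i)
    calc V i = (M * W j₀) * V i := by rw [hMW, one_mul]
      _ = M * (W j₀ * V i) := by rw [mul_assoc]
      _ = M * (c (j₀, i) • 1) := by rw [h1]
      _ = c (j₀, i) • M := by rw [mul_smul_comm, mul_one]
  set t : ℝ := ∑ i, Complex.normSq (c (j₀, i)) with ht
  have htpos : 0 < t := by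
    have h1 : 0 < Complex.normSq (c (j₀, i₀)) := Complex.normSq_pos.mpr hc0
    have h2 : Complex.normSq (c (j₀, i₀)) ≤ t :=
      Finset.single_le_sum (f := fun i => Complex.normSq (c (j₀, i)))
        (fun i _ => Complex.normSq_nonneg _) (Finset.mem_univ i₀)
    linarith
  refine ⟨(Real.sqrt t : ℂ) • M, ?_, ?_⟩
  · rw [Matrix.isUnit_iff_isUnit_det, Matrix.det_smul, isUnit_iff_ne_zero]
    have hMdet : M.det ≠ 0 := by
      have hd := congrArg Matrix.det hMW
      rw [Matrix.det_mul, Matrix.det_one] at hd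
      exact left_ne_zero_of_mul_eq_one hd
    exact mul_ne_zero (pow_ne_zero _ (by exact_mod_cast Real.sqrt_ne_zero'.mpr htpos)) hMdet
  · intro ρ
    rw [hA]
    have hterm : ∀ i : Fin s, (V i)ᴴ * ρ * V i
        = ((starRingEnd ℂ) (c (j₀, i)) * c (j₀, i)) • (Mᴴ * ρ * M) := by
      intro i
      rw [hVi i, Matrix.conjTranspose_smul]
      rw [Matrix.smul_mul, Matrix.mul_smul, Matrix.smul_mul, smul_smul,
        Complex.star_def, mul_comm]
    rw [Finset.sum_congr rfl (fun i _ => hterm i), ← Finset.sum_smul]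
    rw [Matrix.conjTranspose_smul, Matrix.smul_mul, Matrix.mul_smul, Matrix.smul_mul, smul_smul]
    congr 1
    have : ∑ i, (starRingEnd ℂ) (c (j₀, i)) * c (j₀, i) = (t : ℂ) := by
      rw [ht]
      push_cast
      exact Finset.sum_congr rfl fun i _ => (Complex.normSq_eq_conj_mul_self).symm
    rw [this]
    rw [Complex.star_def, Complex.conj_ofReal, ← Complex.ofReal_mul,
      Real.mul_self_sqrt htpos.le]
end

section
/- Let A be a completely positive map Aρ = Σᵢ₌₁ˢ Vᵢ†ρVᵢ on an n-dimensional Hilbert space. If there exist n+1 pure states ρ₁,…,ρ_{n+1} in general position (any n of the corresponding vectors form a basis) such that each Aρⱼ has rank one and the Aρⱼ are in general position, then A is a nonnegative multiple of a single Kraus map: Aρ = β V†ρV for some β > 0 and invertible V. -/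
open scoped Matrix

/-!
A sum of rank-one operators `∑ wᵢ wᵢᴴ` equals `y yᴴ` only if every `wᵢ` is a multiple of `y`, so
each `Vᵢᴴ` maps `xⱼ` into the line of `yⱼ`. A nonzero matrix `M` with `M xⱼ = cⱼ yⱼ` carries the
linear relation `∑ aⱼ xⱼ = 0` to the relation `∑ aⱼ cⱼ yⱼ = 0`; for vectors in general position
such a relation is unique up to scaling and has no zero coefficient. Hence all `cⱼ ≠ 0`, so `M`
is invertible, and any two such matrices differ by a scalar factor. Thus `Vᵢᴴ = tᵢ L` for one
invertible `L`, and `A ρ = (∑ |tᵢ|²) L ρ Lᴴ`.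
-/

/-- Vectors x₁,…,x_{n+1} in ℂⁿ are in general position if any n of them are
linearly independent. -/
def InGeneralPosition {n : ℕ} (x : Fin (n + 1) → (Fin n → ℂ)) : Prop :=
  ∀ s : Finset (Fin (n + 1)), s.card = n →
    LinearIndependent ℂ (fun i : s => x i.1)

open Matrix

section

open scoped ComplexOrder

variable {𝕜 : Type*} [RCLike 𝕜] {m : Type*} [Fintype m]

theorem star_dotProduct_vecMulVec_mulVec (u z : m → 𝕜) :
    star z ⬝ᵥ (vecMulVec u (star u) *ᵥ z) = star (star u ⬝ᵥ z) * (star u ⬝ᵥ z) := by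
  rw [vecMulVec_mulVec, op_smul_eq_smul, dotProduct_smul, smul_eq_mul, mul_comm,
    star_dotProduct]

theorem conjTranspose_mul_vecMulVec_mul (V : Matrix m m 𝕜) (x : m → 𝕜) :
    Vᴴ * vecMulVec x (star x) * V = vecMulVec (Vᴴ *ᵥ x) (star (Vᴴ *ᵥ x)) := by
  rw [mul_vecMulVec, vecMulVec_mul, star_mulVec, conjTranspose_conjTranspose]

variable {ι : Type*} [Fintype ι] {w : ι → m → 𝕜} {y : m → 𝕜}

theorem star_dotProduct_eq_zero_of_sum_vecMulVec_eq
    (h : ∑ i, vecMulVec (w i) (star (w i)) = vecMulVec y (star y)) {z : m → 𝕜}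
    (hz : star y ⬝ᵥ z = 0) (i : ι) : star (w i) ⬝ᵥ z = 0 := by
  have hq := congrArg (fun M => star z ⬝ᵥ (M *ᵥ z)) h
  simp only [sum_mulVec, dotProduct_sum, star_dotProduct_vecMulVec_mulVec, hz, mul_zero] at hq
  exact congrFun (dotProduct_star_self_eq_zero.mp hq) i

theorem exists_eq_smul_of_sum_vecMulVec_eq
    (h : ∑ i, vecMulVec (w i) (star (w i)) = vecMulVec y (star y)) (i : ι) :
    ∃ c : 𝕜, w i = c • y := by
  set c := (star y ⬝ᵥ w i) / (star y ⬝ᵥ y)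
  have hyz : star y ⬝ᵥ (w i - c • y) = 0 := by
    rcases eq_or_ne y 0 with rfl | hy
    · simp
    have hyy : star y ⬝ᵥ y ≠ 0 := dotProduct_star_self_eq_zero.not.mpr hy
    rw [dotProduct_sub, dotProduct_smul, smul_eq_mul, div_mul_cancel₀ _ hyy, sub_self]
  have hwz := star_dotProduct_eq_zero_of_sum_vecMulVec_eq h hyz i
  refine ⟨c, sub_eq_zero.mp (dotProduct_star_self_eq_zero.mp ?_)⟩
  rw [star_sub, sub_dotProduct, hwz, star_smul, smul_dotProduct, hyz, smul_zero, sub_zero]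

theorem sum_conjTranspose_mul_mul_eq_smul {V : ι → Matrix m m 𝕜} {L : Matrix m m 𝕜}
    {t : ι → 𝕜} (h : ∀ i, (V i)ᴴ = t i • L) (ρ : Matrix m m 𝕜) :
    ∑ i, (V i)ᴴ * ρ * V i = ((∑ i, ‖t i‖ ^ 2 : ℝ) : 𝕜) • (L * ρ * Lᴴ) := by
  have hV : ∀ i, V i = star (t i) • Lᴴ := fun i => by
    rw [← conjTranspose_conjTranspose (V i), h, conjTranspose_smul]
  rw [RCLike.ofReal_sum, Finset.sum_smul]
  refine Finset.sum_congr rfl fun i _ => ?_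
  rw [h, hV, Matrix.smul_mul, Matrix.mul_smul, Matrix.smul_mul, smul_smul, RCLike.star_def,
    RCLike.conj_mul, RCLike.ofReal_pow]

end

theorem sum_mul_smul_eq_zero_of_mulVec_eq_smul {K m ι : Type*} [CommRing K] [Fintype m]
    [Fintype ι] {M : Matrix m m K} {x y : ι → m → K} {c a : ι → K}
    (hM : ∀ j, M *ᵥ x j = c j • y j) (ha : ∑ j, a j • x j = 0) :
    ∑ j, (a j * c j) • y j = 0 := by
  simp_rw [mul_smul, ← hM, ← mulVec_smul, ← mulVec_sum, ha, mulVec_zero]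

namespace InGeneralPosition

variable {n : ℕ} {x y : Fin (n + 1) → Fin n → ℂ}

theorem linearIndependent_comp_succAbove (hx : InGeneralPosition x) (j : Fin (n + 1)) :
    LinearIndependent ℂ (x ∘ j.succAbove) :=
  (hx (Finset.univ.erase j) (by simp)).comp
    (fun k => ⟨j.succAbove k, by simp [Fin.succAbove_ne]⟩)
    fun _ _ h => Fin.succAbove_right_injective (congrArg Subtype.val h)

theorem span_range_eq_top (hx : InGeneralPosition x) : Submodule.span ℂ (Set.range x) = ⊤ :=
  eq_top_mono (Submodule.span_mono (Set.range_comp_subset_range _ _))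
    ((hx.linearIndependent_comp_succAbove 0).span_eq_top_of_card_eq_finrank' (by simp))

theorem eq_zero_of_sum_smul_eq_zero (hx : InGeneralPosition x) {c : Fin (n + 1) → ℂ}
    (hc : ∑ j, c j • x j = 0) {j : Fin (n + 1)} (hj : c j = 0) : c = 0 := by
  rw [Fin.sum_univ_succAbove _ j, hj, zero_smul, zero_add] at hc
  have hrest := Fintype.linearIndependent_iff.mp (hx.linearIndependent_comp_succAbove j) _ hc
  funext i
  obtain rfl | ⟨k, rfl⟩ := j.eq_self_or_eq_succAbove i
  exacts [hj, hrest k]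

theorem exists_eq_smul_of_sum_smul_eq_zero (hx : InGeneralPosition x) {a b : Fin (n + 1) → ℂ}
    (ha : ∑ j, a j • x j = 0) (ha0 : a ≠ 0) (hb : ∑ j, b j • x j = 0) :
    ∃ t : ℂ, b = t • a := by
  have ha0' : a 0 ≠ 0 := fun h => ha0 (hx.eq_zero_of_sum_smul_eq_zero ha h)
  refine ⟨b 0 / a 0, sub_eq_zero.mp (hx.eq_zero_of_sum_smul_eq_zero (j := 0) ?_ ?_)⟩
  · simp only [Pi.sub_apply, Pi.smul_apply, sub_smul, smul_eq_mul, mul_smul,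
      Finset.sum_sub_distrib, ← Finset.smul_sum, ha, hb, smul_zero, sub_zero]
  · simp [ha0']

theorem exists_sum_smul_eq_zero (hx : InGeneralPosition x) :
    ∃ a : Fin (n + 1) → ℂ, (∀ j, a j ≠ 0) ∧ ∑ j, a j • x j = 0 := by
  have : ¬ LinearIndependent ℂ x := fun h => by simpa using h.fintype_card_le_finrank
  obtain ⟨a, ha, j, hj⟩ := Fintype.not_linearIndependent_iff.mp this
  exact ⟨a, fun i hi => hj (congrFun (hx.eq_zero_of_sum_smul_eq_zero ha hi) j), ha⟩

theorem ne_zero (hx : InGeneralPosition x) (hn : n ≠ 0) (j : Fin (n + 1)) : x j ≠ 0 := by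
  have : Nontrivial (Fin (n + 1)) := Fin.nontrivial_iff_two_le.mpr (by omega)
  obtain ⟨j', hj'⟩ := exists_ne j
  obtain ⟨k, rfl⟩ := Fin.exists_succAbove_eq hj'.symm
  exact (hx.linearIndependent_comp_succAbove j').ne_zero k

theorem eq_of_mulVec_eq (hx : InGeneralPosition x) {M M' : Matrix (Fin n) (Fin n) ℂ}
    (h : ∀ j, M *ᵥ x j = M' *ᵥ x j) : M = M' :=
  Matrix.toLin'.injective (LinearMap.ext_on_range hx.span_range_eq_top h)

variable {M M' : Matrix (Fin n) (Fin n) ℂ} {c c' : Fin (n + 1) → ℂ}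

theorem coeff_ne_zero_of_mulVec_eq_smul (hx : InGeneralPosition x) (hy : InGeneralPosition y)
    (hM : ∀ j, M *ᵥ x j = c j • y j) (hM0 : M ≠ 0) (j : Fin (n + 1)) : c j ≠ 0 := by
  obtain ⟨a, ha0, ha⟩ := hx.exists_sum_smul_eq_zero
  intro hcj
  have hac : (fun j => a j * c j) = 0 := hy.eq_zero_of_sum_smul_eq_zero
    (sum_mul_smul_eq_zero_of_mulVec_eq_smul hM ha) (j := j) (by simp [hcj])
  refine hM0 (hx.eq_of_mulVec_eq fun k => ?_)
  have hck : c k = 0 := (mul_eq_zero.mp (congrFun hac k)).resolve_left (ha0 k)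
  rw [hM, hck, zero_smul, zero_mulVec]

theorem isUnit_of_mulVec_eq_smul (hx : InGeneralPosition x) (hy : InGeneralPosition y)
    (hM : ∀ j, M *ᵥ x j = c j • y j) (hM0 : M ≠ 0) : IsUnit M := by
  rw [← mulVec_surjective_iff_isUnit, ← Matrix.coe_mulVecLin, ← LinearMap.range_eq_top,
    eq_top_iff, ← hy.span_range_eq_top, Submodule.span_le]
  rintro _ ⟨j, rfl⟩
  refine ⟨(c j)⁻¹ • x j, ?_⟩
  rw [mulVecLin_apply, mulVec_smul, hM,
    inv_smul_smul₀ (coeff_ne_zero_of_mulVec_eq_smul hx hy hM hM0 j)]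

theorem exists_eq_smul_of_mulVec_eq_smul (hx : InGeneralPosition x) (hy : InGeneralPosition y)
    (hM : ∀ j, M *ᵥ x j = c j • y j) (hM0 : M ≠ 0) (hM' : ∀ j, M' *ᵥ x j = c' j • y j) :
    ∃ t : ℂ, M' = t • M := by
  obtain ⟨a, ha0, ha⟩ := hx.exists_sum_smul_eq_zero
  have hc0 := coeff_ne_zero_of_mulVec_eq_smul hx hy hM hM0
  obtain ⟨t, ht⟩ := hy.exists_eq_smul_of_sum_smul_eq_zero
    (sum_mul_smul_eq_zero_of_mulVec_eq_smul hM ha)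
    (fun h => mul_ne_zero (ha0 0) (hc0 0) (congrFun h 0))
    (sum_mul_smul_eq_zero_of_mulVec_eq_smul hM' ha)
  refine ⟨t, hx.eq_of_mulVec_eq fun j => ?_⟩
  have hc' : c' j = t * c j := mul_left_cancel₀ (ha0 j) (by
    simpa [mul_left_comm] using congrFun ht j)
  rw [hM', smul_mulVec, hM, hc', smul_smul]

end InGeneralPosition

theorem stmt_15_general (n s : ℕ)
    (A : Matrix (Fin n) (Fin n) ℂ →ₗ[ℂ] Matrix (Fin n) (Fin n) ℂ)
    (V : Fin s → Matrix (Fin n) (Fin n) ℂ)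
    (hA : ∀ ρ, A ρ = ∑ i, (V i)ᴴ * ρ * V i)
    (x : Fin (n + 1) → (Fin n → ℂ))
    (hx_gp : InGeneralPosition x)
    (y : Fin (n + 1) → (Fin n → ℂ))
    (hy_gp : InGeneralPosition y)
    (him : ∀ j, A (Matrix.vecMulVec (x j) (star (x j)))
      = Matrix.vecMulVec (y j) (star (y j))) :
    ∃ (β : ℝ) (V₀ : Matrix (Fin n) (Fin n) ℂ), 0 < β ∧ IsUnit V₀ ∧
      ∀ ρ, A ρ = (β : ℂ) • (V₀ᴴ * ρ * V₀) := by
  rcases Nat.eq_zero_or_pos n with rfl | hn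
  · exact ⟨1, 1, one_pos, isUnit_one, fun _ => Subsingleton.elim _ _⟩
  have hcol (i j) : ∃ c : ℂ, (V i)ᴴ *ᵥ x j = c • y j := by
    refine exists_eq_smul_of_sum_vecMulVec_eq (w := fun i => (V i)ᴴ *ᵥ x j) ?_ i
    simp_rw [← conjTranspose_mul_vecMulVec_mul, ← hA, him]
  choose c hc using hcol
  obtain ⟨i₀, hi₀⟩ : ∃ i, (V i)ᴴ ≠ 0 := by
    by_contra! h
    apply hy_gp.ne_zero hn.ne' 0
    simpa [hA, h, eq_comm (a := (0 : Matrix _ _ ℂ))] using him 0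
  choose t ht using fun i => hx_gp.exists_eq_smul_of_mulVec_eq_smul hy_gp (hc i₀) hi₀ (hc i)
  have ht₀ : t i₀ ≠ 0 := fun h => hi₀ (by rw [ht i₀, h, zero_smul])
  refine ⟨∑ i, ‖t i‖ ^ 2, (V i₀)ᴴᴴ, ?_, ?_, fun ρ => ?_⟩
  · exact (pow_pos (norm_pos_iff.mpr ht₀) 2).trans_le
      (Finset.single_le_sum (fun i _ => sq_nonneg ‖t i‖) (Finset.mem_univ i₀))
  · exact (isUnit_conjTranspose _).mpr (hx_gp.isUnit_of_mulVec_eq_smul hy_gp (hc i₀) hi₀)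
  · rw [hA, sum_conjTranspose_mul_mul_eq_smul ht, conjTranspose_conjTranspose]
    rfl

/-- If a completely positive map Aρ = Σᵢ Vᵢ†ρVᵢ on an
n-dimensional Hilbert space sends n+1 pure states in general position to
rank-one operators in general position, then A is a positive multiple of a
single invertible Kraus map: Aρ = β V†ρV, β > 0, V invertible. -/
theorem stmt_15 (n s : ℕ)
    (A : Matrix (Fin n) (Fin n) ℂ →ₗ[ℂ] Matrix (Fin n) (Fin n) ℂ)
    (V : Fin s → Matrix (Fin n) (Fin n) ℂ)
    (hA : ∀ ρ, A ρ = ∑ i, (V i)ᴴ * ρ * V i)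
    (x : Fin (n + 1) → (Fin n → ℂ))
    (hx_unit : ∀ j, star (x j) ⬝ᵥ x j = 1)
    (hx_gp : InGeneralPosition x)
    (y : Fin (n + 1) → (Fin n → ℂ))
    (hy_ne : ∀ j, y j ≠ 0)
    (hy_gp : InGeneralPosition y)
    (him : ∀ j, A (Matrix.vecMulVec (x j) (star (x j)))
      = Matrix.vecMulVec (y j) (star (y j))) :
    ∃ (β : ℝ) (V₀ : Matrix (Fin n) (Fin n) ℂ), 0 < β ∧ IsUnit V₀ ∧
      ∀ ρ, A ρ = (β : ℂ) • (V₀ᴴ * ρ * V₀) :=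
  stmt_15_general n s A V hA x hx_gp y hy_gp him
end
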